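/- arXiv:1910.04008 — 8 statements merged into one kernel-verified Lean document; each statement's English description precedes it below -/
import Mathlib

section
/- Let L > 0, H > 0, K > 0, and let u : [-L,L] → ℝ be continuously differentiable with u(-L) = u(L) = 0 and u'(-L) = u'(L) = 0, and suppose u' is absolutely continuous with derivative u'' ∈ L²(-L,L) satisfying (∫_{-L}^L u''(y)² dy)^{1/2} ≤ K. Set x_T := max{ L - (H/(2K))^{2/3}, L/2 }. Then u(x) ≥ -H/2 for every x ∈ [-L,-x_T] ∪ [x_T, L]. -/
open MeasureTheory Set

/-- Elementary Cauchy–Schwarz for interval integrals via AM–GM. -/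
lemma cs_aux (a b K : ℝ) (hab : a ≤ b) (f : ℝ → ℝ)
    (hf : IntervalIntegrable f volume a b)
    (hsq : IntervalIntegrable (fun x => f x ^ 2) volume a b)
    (hK : 0 < K) (hI : (∫ t in a..b, f t ^ 2) ≤ K ^ 2) :
    |∫ t in a..b, f t| ≤ K * Real.sqrt (b - a) := by
  rcases eq_or_lt_of_le hab with rfl | hlt
  · simp
  · set s := Real.sqrt (b - a) with hs
    have hs0 : 0 < s := Real.sqrt_pos.2 (by linarith)
    have hs2 : s ^ 2 = b - a := Real.sq_sqrt (by linarith)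
    set c := K / s with hc
    have hc0 : 0 < c := div_pos hK hs0
    have key : ∀ g : ℝ → ℝ, IntervalIntegrable g volume a b →
        (∀ t, g t ^ 2 = f t ^ 2) → (∫ t in a..b, g t) ≤ K * s := by
      intro g hg hgf
      have h1 : (∫ t in a..b, g t) ≤ ∫ t in a..b, (f t ^ 2 / (2 * c) + c / 2) := by
        apply intervalIntegral.integral_mono_on hab hg
        · exact (hsq.div_const _).add (intervalIntegrable_const)
        · intro t _
          have h2 : g t ^ 2 = f t ^ 2 := hgf t
          have h3 : g t * (2 * c) ≤ f t ^ 2 + c * c := by nlinarith [sq_nonneg (g t - c)]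
          have h4 : f t ^ 2 / (2 * c) + c / 2 = (f t ^ 2 + c * c) / (2 * c) := by
            field_simp
          rw [h4, le_div_iff₀ (by positivity)]
          exact h3
      have h2 : (∫ t in a..b, (f t ^ 2 / (2 * c) + c / 2))
          = (∫ t in a..b, f t ^ 2) / (2 * c) + (b - a) * (c / 2) := by
        rw [intervalIntegral.integral_add (hsq.div_const _) intervalIntegrable_const,
          intervalIntegral.integral_div, intervalIntegral.integral_const, smul_eq_mul]
      have h3 : (∫ t in a..b, f t ^ 2) / (2 * c) + (b - a) * (c / 2) ≤ K * s := by
        have hcs : c * s = K := by rw [hc]; field_simp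
        calc (∫ t in a..b, f t ^ 2) / (2 * c) + (b - a) * (c / 2)
            ≤ K ^ 2 / (2 * c) + (b - a) * (c / 2) := by
              gcongr
          _ = K * s := by
              rw [← hs2]
              field_simp
              nlinarith [hcs, hs0, hc0]
      linarith
    have hpos := key f hf (fun t => rfl)
    have hneg := key (fun t => -f t) hf.neg (fun t => by ring)
    rw [intervalIntegral.integral_neg] at hneg
    rw [abs_le]
    constructor <;> linarith

/-- Step 1 of the proof of Corollary 1.2: a clamped `H²` function on `[-L,L]` whose
second derivative has `L²` norm at most `K` stays above `-H/2` on
`[-L,-x_T] ∪ [x_T,L]`, where `x_T = max(L - (H/(2K))^{2/3}, L/2)`. -/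
theorem stmt2 (L H K : ℝ) (hL : 0 < L) (hH : 0 < H) (hK : 0 < K) (u u' u'' : ℝ → ℝ)
    (hu : ∀ x ∈ Icc (-L) L, HasDerivWithinAt u (u' x) (Icc (-L) L) x)
    (hu'c : ContinuousOn u' (Icc (-L) L))
    (huL : u (-L) = 0) (huR : u L = 0) (hu'L : u' (-L) = 0) (hu'R : u' L = 0)
    (hAC : ∀ x ∈ Icc (-L) L, u' x = u' (-L) + ∫ t in (-L)..x, u'' t)
    (hint : IntervalIntegrable u'' volume (-L) L)
    (hsq : IntervalIntegrable (fun x => (u'' x) ^ 2) volume (-L) L)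
    (hbound : Real.sqrt (∫ y in (-L)..L, (u'' y) ^ 2) ≤ K) :
    ∀ x ∈ Icc (-L) (-(max (L - (H / (2 * K)) ^ ((2 : ℝ) / 3)) (L / 2))) ∪
        Icc (max (L - (H / (2 * K)) ^ ((2 : ℝ) / 3)) (L / 2)) L,
      -(H / 2) ≤ u x := by
  set M : ℝ := (H / (2 * K)) ^ ((2 : ℝ) / 3) with hMdef
  have hq : (0 : ℝ) < H / (2 * K) := by positivity
  have hM0 : 0 < M := Real.rpow_pos_of_pos hq _
  have hMcube : M * Real.sqrt M = H / (2 * K) := by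
    rw [Real.sqrt_eq_rpow, hMdef, ← Real.rpow_mul hq.le, ← Real.rpow_add hq]
    have he : (2:ℝ)/3 + 2/3 * (1/2) = 1 := by norm_num
    rw [he, Real.rpow_one]
  -- total L² bound
  have hI0 : 0 ≤ ∫ y in (-L)..L, (u'' y) ^ 2 :=
    intervalIntegral.integral_nonneg (by linarith) (fun t _ => sq_nonneg _)
  have hI : (∫ y in (-L)..L, (u'' y) ^ 2) ≤ K ^ 2 := by
    nlinarith [Real.sq_sqrt hI0, Real.sqrt_nonneg (∫ y in (-L)..L, (u'' y) ^ 2)]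
  -- total integral of u'' is 0
  have htot : (∫ t in (-L)..L, u'' t) = 0 := by
    have := hAC L ⟨by linarith, le_refl L⟩
    rw [hu'R, hu'L] at this; linarith
  have hLL : -L ≤ L := by linarith
  -- integrability on subintervals
  have hmono : ∀ t ∈ Icc (-L) L, IntervalIntegrable u'' volume (-L) t ∧
      IntervalIntegrable u'' volume t L ∧
      IntervalIntegrable (fun x => (u'' x) ^ 2) volume (-L) t ∧
      IntervalIntegrable (fun x => (u'' x) ^ 2) volume t L := by
    intro t ht
    have h1 : uIcc (-L) t ⊆ uIcc (-L) L := by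
      rw [uIcc_of_le ht.1, uIcc_of_le hLL]; exact Icc_subset_Icc le_rfl ht.2
    have h2 : uIcc t L ⊆ uIcc (-L) L := by
      rw [uIcc_of_le ht.2, uIcc_of_le hLL]; exact Icc_subset_Icc ht.1 le_rfl
    exact ⟨hint.mono_set h1, hint.mono_set h2, hsq.mono_set h1, hsq.mono_set h2⟩
  -- partial L² bounds
  have hIsplit : ∀ t ∈ Icc (-L) L,
      (∫ y in (-L)..t, (u'' y) ^ 2) ≤ K ^ 2 ∧ (∫ y in t..L, (u'' y) ^ 2) ≤ K ^ 2 := by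
    intro t ht
    obtain ⟨-, -, hq1, hq2⟩ := hmono t ht
    have hadd := intervalIntegral.integral_add_adjacent_intervals hq1 hq2
    have hn1 : 0 ≤ ∫ y in (-L)..t, (u'' y) ^ 2 :=
      intervalIntegral.integral_nonneg ht.1 (fun s _ => sq_nonneg _)
    have hn2 : 0 ≤ ∫ y in t..L, (u'' y) ^ 2 :=
      intervalIntegral.integral_nonneg ht.2 (fun s _ => sq_nonneg _)
    constructor <;> linarith
  -- pointwise bound on u'
  have hub : ∀ t ∈ Icc (-L) L,
      |u' t| ≤ K * Real.sqrt (t + L) ∧ |u' t| ≤ K * Real.sqrt (L - t) := by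
    intro t ht
    obtain ⟨hi1, hi2, hq1, hq2⟩ := hmono t ht
    obtain ⟨hb1, hb2⟩ := hIsplit t ht
    have hut : u' t = ∫ s in (-L)..t, u'' s := by
      have := hAC t ht; rw [hu'L] at this; linarith
    constructor
    · have := cs_aux (-L) t K ht.1 u'' hi1 hq1 hK hb1
      rw [hut]
      calc |∫ s in (-L)..t, u'' s| ≤ K * Real.sqrt (t - -L) := this
        _ = K * Real.sqrt (t + L) := by ring_nf
    · have hut2 : u' t = -∫ s in t..L, u'' s := by
        have hadd := intervalIntegral.integral_add_adjacent_intervals hi1 hi2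
        rw [htot] at hadd; rw [hut]; linarith
      have := cs_aux t L K ht.2 u'' hi2 hq2 hK hb2
      rw [hut2, abs_neg]
      exact this
  have hxT_le : L - max (L - M) (L / 2) ≤ M := by
    have := le_max_left (L - M) (L / 2); linarith
  have hxT_le_L : max (L - M) (L / 2) ≤ L := by
    apply max_le <;> linarith
  -- main estimate: |u x| ≤ K * √d * d with d ≤ M implies conclusion
  have hfinal : ∀ x, |u x| ≤ K * Real.sqrt M * M → -(H / 2) ≤ u x := by
    intro x hx
    have hK' : K ≠ 0 := ne_of_gt hK
    have : K * Real.sqrt M * M = H / 2 := by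
      calc K * Real.sqrt M * M = K * (M * Real.sqrt M) := by ring
        _ = K * (H / (2 * K)) := by rw [hMcube]
        _ = H / 2 := by field_simp
    rw [this] at hx
    linarith [(abs_le.mp hx).1]
  have hmul : ∀ d : ℝ, 0 ≤ d → d ≤ M → K * Real.sqrt d * d ≤ K * Real.sqrt M * M := by
    intro d hd0 hdM
    have h1 := Real.sqrt_le_sqrt hdM
    have h2 : Real.sqrt d * d ≤ Real.sqrt M * M :=
      mul_le_mul h1 hdM hd0 (Real.sqrt_nonneg M)
    nlinarith [hK.le]
  intro x hx
  rcases hx with hx | hx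
  · -- left case: x ∈ [-L, -xT]
    have hxL : -L ≤ x := hx.1
    have hxU : x ≤ L := by
      have := hx.2
      have h2 : L / 2 ≤ max (L - M) (L / 2) := le_max_right _ _
      linarith
    have hsub : Icc (-L) x ⊆ Icc (-L) L := Icc_subset_Icc le_rfl hxU
    have hftc : (∫ t in (-L)..x, u' t) = u x - u (-L) := by
      apply intervalIntegral.integral_eq_sub_of_hasDeriv_right_of_le hxL
      · exact fun t ht => ((hu t (hsub ht)).continuousWithinAt).mono hsub
      · intro t ht
        refine (hu t (hsub ⟨ht.1.le, ht.2.le⟩)).mono_of_mem_nhdsWithin ?_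
        refine Filter.mem_of_superset (Ioc_mem_nhdsGT_of_mem ⟨le_rfl, lt_of_lt_of_le ht.2 hxU⟩) ?_
        exact fun s hs => ⟨by linarith [ht.1, hs.1], hs.2⟩
      · apply ContinuousOn.intervalIntegrable
        rw [uIcc_of_le hxL]
        exact hu'c.mono hsub
    have hC : ∀ t ∈ uIoc (-L) x, ‖u' t‖ ≤ K * Real.sqrt (x + L) := by
      rw [uIoc_of_le hxL]
      intro t ht
      have h1 := (hub t ⟨ht.1.le, le_trans ht.2 hxU⟩).1
      have h2 : Real.sqrt (t + L) ≤ Real.sqrt (x + L) := Real.sqrt_le_sqrt (by linarith [ht.2])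
      calc ‖u' t‖ = |u' t| := rfl
        _ ≤ K * Real.sqrt (t + L) := h1
        _ ≤ K * Real.sqrt (x + L) := by nlinarith [Real.sqrt_nonneg (t + L)]
    have hnorm := intervalIntegral.norm_integral_le_of_norm_le_const hC
    rw [hftc, huL, sub_zero] at hnorm
    have hd : |x - -L| = x + L := by rw [abs_of_nonneg (by linarith)]; ring
    rw [hd] at hnorm
    apply hfinal
    calc |u x| ≤ K * Real.sqrt (x + L) * (x + L) := hnorm
      _ ≤ K * Real.sqrt M * M := by
          apply hmul _ (by linarith)
          have := hx.2
          have h1 : L - M ≤ max (L - M) (L / 2) := le_max_left _ _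
          linarith
  · -- right case: x ∈ [xT, L]
    have hxU : x ≤ L := hx.2
    have hxL : -L ≤ x := by
      have := hx.1
      have h2 : L / 2 ≤ max (L - M) (L / 2) := le_max_right _ _
      linarith
    have hsub : Icc x L ⊆ Icc (-L) L := Icc_subset_Icc hxL le_rfl
    have hftc : (∫ t in x..L, u' t) = u L - u x := by
      apply intervalIntegral.integral_eq_sub_of_hasDeriv_right_of_le hxU
      · exact fun t ht => ((hu t (hsub ht)).continuousWithinAt).mono hsub
      · intro t ht
        refine (hu t (hsub ⟨ht.1.le, ht.2.le⟩)).mono_of_mem_nhdsWithin ?_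
        refine Filter.mem_of_superset (Ioc_mem_nhdsGT_of_mem ⟨le_rfl, ht.2⟩) ?_
        exact fun s hs => ⟨by linarith [ht.1, hs.1], hs.2⟩
      · apply ContinuousOn.intervalIntegrable
        rw [uIcc_of_le hxU]
        exact hu'c.mono hsub
    have hC : ∀ t ∈ uIoc x L, ‖u' t‖ ≤ K * Real.sqrt (L - x) := by
      rw [uIoc_of_le hxU]
      intro t ht
      have h1 := (hub t ⟨le_trans hxL ht.1.le, ht.2⟩).2
      have h2 : Real.sqrt (L - t) ≤ Real.sqrt (L - x) := Real.sqrt_le_sqrt (by linarith [ht.1])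
      calc ‖u' t‖ = |u' t| := rfl
        _ ≤ K * Real.sqrt (L - t) := h1
        _ ≤ K * Real.sqrt (L - x) := by nlinarith [Real.sqrt_nonneg (L - t)]
    have hnorm := intervalIntegral.norm_integral_le_of_norm_le_const hC
    rw [hftc, huR, zero_sub, norm_neg] at hnorm
    have hd : |L - x| = L - x := abs_of_nonneg (by linarith)
    rw [hd] at hnorm
    apply hfinal
    calc |u x| ≤ K * Real.sqrt (L - x) * (L - x) := hnorm
      _ ≤ K * Real.sqrt M * M := by
          apply hmul _ (by linarith)
          have := hx.1
          have h1 : L - M ≤ max (L - M) (L / 2) := le_max_left _ _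
          linarith
end

section
/- Let 𝓗 be a real Hilbert space with norm ‖·‖, let c₁ > 0, and let δ ∈ (0, min{1, 1/(16c₁)}). Let (uₙ)_{n≥0} be a sequence in 𝓗 and (eₙ)_{n≥0} a sequence of real numbers such that (i) for every n ≥ 0, (1/(2δ)) Σ_{j=0}^{n} ‖u_{j+1} - u_j‖² + e_{n+1} ≤ e₀, and (ii) for every n ≥ 0, eₙ ≥ -c₁(1 + ‖uₙ‖²). Then for every n ≥ 0, ‖u_{n+1}‖² ≤ (6‖u₀‖² + 2 + 2e₀/c₁) · e^{16 c₁ (n+1) δ}. -/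
open Finset

set_option maxHeartbeats 1000000 in
/-- Discrete `L²`-estimate (4.4) for the implicit Euler (minimizing movement) scheme:
from the telescoped one-step energy dissipation inequality and the quadratic lower
bound on the energy one obtains, via a discrete Gronwall lemma, the exponential bound
`‖u_{n+1}‖² ≤ (6‖u₀‖² + 2 + 2e₀/c₁) e^{16c₁(n+1)δ}`. -/
theorem stmt3 {𝓗 : Type*} [NormedAddCommGroup 𝓗] [InnerProductSpace ℝ 𝓗]
    (c₁ δ : ℝ) (hc₁ : 0 < c₁) (hδ : δ ∈ Set.Ioo 0 (min 1 (1 / (16 * c₁))))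
    (u : ℕ → 𝓗) (e : ℕ → ℝ)
    (hdiss : ∀ n : ℕ,
      (1 / (2 * δ)) * ∑ j ∈ Finset.range (n + 1), ‖u (j + 1) - u j‖ ^ 2 + e (n + 1) ≤ e 0)
    (hlow : ∀ n : ℕ, -c₁ * (1 + ‖u n‖ ^ 2) ≤ e n) :
    ∀ n : ℕ, ‖u (n + 1)‖ ^ 2 ≤
      (6 * ‖u 0‖ ^ 2 + 2 + 2 * e 0 / c₁) * Real.exp (16 * c₁ * ((n : ℝ) + 1) * δ) := by
  obtain ⟨hδ0, hδm⟩ := hδ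
  have hδc : δ < 1 / (16 * c₁) := lt_of_lt_of_le hδm (min_le_right _ _)
  have h16c : (0:ℝ) < 16 * c₁ := by linarith
  have h16 : 16 * c₁ * δ < 1 := by
    have h := mul_lt_mul_of_pos_left hδc h16c
    rw [mul_one_div, div_self h16c.ne'] at h
    linarith
  have ht : 0 < δ * c₁ := mul_pos hδ0 hc₁
  have ht16 : δ * c₁ < 1/16 := by nlinarith
  have hε : (0:ℝ) < 8 * c₁ * δ := by positivity
  -- (1) sum bound from dissipation + lower bound
  have hS : ∀ n : ℕ, ∑ j ∈ Finset.range (n+1), ‖u (j+1) - u j‖ ^ 2 ≤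
      2 * δ * (e 0 + c₁ * (1 + ‖u (n+1)‖ ^ 2)) := by
    intro n
    have h1 := hdiss n
    have h2 := hlow (n+1)
    have h2δ : (0:ℝ) < 2 * δ := by linarith
    have h3 : (1/(2*δ)) * ∑ j ∈ Finset.range (n+1), ‖u (j+1) - u j‖ ^ 2 ≤
        e 0 + c₁ * (1 + ‖u (n+1)‖ ^ 2) := by linarith
    calc ∑ j ∈ Finset.range (n+1), ‖u (j+1) - u j‖ ^ 2
        = (2*δ) * ((1/(2*δ)) * ∑ j ∈ Finset.range (n+1), ‖u (j+1) - u j‖ ^ 2) := by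
          field_simp
      _ ≤ (2*δ) * (e 0 + c₁ * (1 + ‖u (n+1)‖ ^ 2)) :=
          mul_le_mul_of_nonneg_left h3 h2δ.le
  -- (2) one-step Young inequality
  have hstep : ∀ (ε : ℝ), 0 < ε → ∀ j : ℕ,
      ‖u (j+1)‖ ^ 2 ≤ (1+ε) * ‖u j‖ ^ 2 + (1+1/ε) * ‖u (j+1) - u j‖ ^ 2 := by
    intro ε hεp j
    have htri : ‖u (j+1)‖ ≤ ‖u j‖ + ‖u (j+1) - u j‖ := by
      have h := norm_add_le (u j) (u (j+1) - u j)
      simpa using h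
    have hsq : ‖u (j+1)‖ ^ 2 ≤ (‖u j‖ + ‖u (j+1) - u j‖) ^ 2 :=
      pow_le_pow_left₀ (norm_nonneg _) htri 2
    have hy : 2*‖u j‖*‖u (j+1) - u j‖ ≤ ε*‖u j‖^2 + ‖u (j+1) - u j‖^2/ε := by
      rw [← sub_nonneg]
      have hh : ε*‖u j‖^2 + ‖u (j+1) - u j‖^2/ε - 2*‖u j‖*‖u (j+1) - u j‖
          = (ε*‖u j‖ - ‖u (j+1) - u j‖)^2/ε := by field_simp; ring
      rw [hh]; positivity
    have hdiv : (1/ε) * ‖u (j+1) - u j‖^2 = ‖u (j+1) - u j‖^2/ε := by ring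
    nlinarith [hsq, hy]
  -- (3) telescoped inequality
  have hsum : ∀ n : ℕ, ‖u (n+1)‖ ^ 2 - ‖u 0‖ ^ 2 ≤
      8*c₁*δ * (∑ j ∈ Finset.range (n+1), ‖u j‖ ^ 2)
        + (1+1/(8*c₁*δ)) * ∑ j ∈ Finset.range (n+1), ‖u (j+1) - u j‖ ^ 2 := by
    intro n
    have h1 : ‖u (n+1)‖ ^ 2 - ‖u 0‖ ^ 2
        = ∑ j ∈ Finset.range (n+1), (‖u (j+1)‖ ^ 2 - ‖u j‖ ^ 2) :=
      (Finset.sum_range_sub (fun j => ‖u j‖ ^ 2) (n+1)).symm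
    rw [h1, Finset.mul_sum, Finset.mul_sum, ← Finset.sum_add_distrib]
    refine Finset.sum_le_sum fun j _ => ?_
    have h := hstep (8*c₁*δ) hε j
    linarith
  -- (4) key inequality with D = 3/4 - 2δc₁
  have hkey : ∀ n : ℕ, (3/4 - 2*δ*c₁) * ‖u (n+1)‖ ^ 2 ≤
      (‖u 0‖ ^ 2 + (2*δ + 1/(4*c₁)) * (e 0 + c₁))
        + 8*c₁*δ * ∑ j ∈ Finset.range (n+1), ‖u j‖ ^ 2 := by
    intro n
    have h1 := hsum n
    have h2 := hS n
    have hnn : (0:ℝ) ≤ 1 + 1/(8*c₁*δ) := by positivity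
    have h3 := mul_le_mul_of_nonneg_left h2 hnn
    have hid : (1 + 1/(8*c₁*δ)) * (2 * δ * (e 0 + c₁ * (1 + ‖u (n+1)‖ ^ 2))) =
        (2*δ + 1/(4*c₁)) * (e 0 + c₁) + (2*δ*c₁ + 1/4) * ‖u (n+1)‖ ^ 2 := by
      field_simp
      ring
    rw [hid] at h3
    linarith
  obtain ⟨D, hDdef⟩ : ∃ D : ℝ, D = 3/4 - 2*δ*c₁ := ⟨_, rfl⟩
  rw [← hDdef] at hkey
  have hD : (0:ℝ) < D := by rw [hDdef]; nlinarith [ht16]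
  obtain ⟨K, hKdef⟩ : ∃ K : ℝ, K = (‖u 0‖ ^ 2 + (2*δ + 1/(4*c₁)) * (e 0 + c₁)) / D := ⟨_, rfl⟩
  obtain ⟨L, hLdef⟩ : ∃ L : ℝ, L = 8*c₁*δ / D := ⟨_, rfl⟩
  have hL0 : (0:ℝ) ≤ L := hLdef ▸ div_nonneg hε.le hD.le
  have hL16 : L ≤ 16*c₁*δ := by
    rw [hLdef, div_le_iff₀ hD, hDdef]
    nlinarith [ht, ht16, mul_nonneg ht.le (by linarith : (0:ℝ) ≤ 1 - 8*(δ*c₁))]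
  -- (5) recursion a_{n+1} ≤ K + L Σ a_j
  have hab : ∀ n : ℕ, ‖u (n+1)‖ ^ 2 ≤ K + L * ∑ j ∈ Finset.range (n+1), ‖u j‖ ^ 2 := by
    intro n
    have heq : K + L * ∑ j ∈ Finset.range (n+1), ‖u j‖ ^ 2
        = ((‖u 0‖ ^ 2 + (2*δ + 1/(4*c₁)) * (e 0 + c₁))
            + 8*c₁*δ * ∑ j ∈ Finset.range (n+1), ‖u j‖ ^ 2) / D := by
      rw [hKdef, hLdef]; field_simp
    rw [heq, le_div_iff₀ hD]
    nlinarith [hkey n]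
  -- (6) discrete Gronwall
  have hB : ∀ n : ℕ, K + L * ∑ j ∈ Finset.range (n+1), ‖u j‖ ^ 2
      ≤ (K + L * ‖u 0‖ ^ 2) * (1+L)^n := by
    intro n
    induction n with
    | zero => simp [Finset.sum_range_one]
    | succ m ih =>
      rw [Finset.sum_range_succ, pow_succ]
      have h1 := hab m
      have h2 : K + L * (∑ j ∈ Finset.range (m+1), ‖u j‖ ^ 2 + ‖u (m+1)‖ ^ 2)
          ≤ (1+L) * (K + L * ∑ j ∈ Finset.range (m+1), ‖u j‖ ^ 2) := by
        nlinarith [mul_le_mul_of_nonneg_left h1 hL0]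
      have h3 := mul_le_mul_of_nonneg_left ih (by linarith : (0:ℝ) ≤ 1+L)
      calc K + L * (∑ j ∈ Finset.range (m+1), ‖u j‖ ^ 2 + ‖u (m+1)‖ ^ 2)
          ≤ (1+L) * (K + L * ∑ j ∈ Finset.range (m+1), ‖u j‖ ^ 2) := h2
        _ ≤ (1+L) * ((K + L * ‖u 0‖ ^ 2) * (1+L)^m) := h3
        _ = (K + L * ‖u 0‖ ^ 2) * ((1+L)^m * (1+L)) := by ring
  -- (7) lower bound on e 0
  have he0 : -(c₁*(1 + (8/7)*‖u 0‖^2)) ≤ e 0 := by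
    have h1 := hdiss 0
    simp only [Finset.sum_range_one, Nat.zero_add] at h1
    have h2 := hlow 1
    have htri : ‖u 1‖ ≤ ‖u 0‖ + ‖u 1 - u 0‖ := by
      have h := norm_add_le (u 0) (u 1 - u 0)
      simpa using h
    have hsq : ‖u 1‖ ^ 2 ≤ (‖u 0‖ + ‖u 1 - u 0‖) ^ 2 :=
      pow_le_pow_left₀ (norm_nonneg _) htri 2
    have hd2 : 8*c₁*‖u 1 - u 0‖^2 ≤ (1/(2*δ))*‖u 1 - u 0‖^2 := by
      apply mul_le_mul_of_nonneg_right _ (sq_nonneg _)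
      rw [le_div_iff₀ (by linarith : (0:ℝ) < 2*δ)]
      nlinarith [h16]
    have h3 : 8*c₁*‖u 1 - u 0‖^2 + e 1 ≤ e 0 := by linarith
    nlinarith [h3, h2, mul_le_mul_of_nonneg_left hsq hc₁.le,
      mul_nonneg hc₁.le (sq_nonneg (‖u 0‖ - 7*‖u 1 - u 0‖))]
  -- (8) the constant is bounded by A
  have hgoal' : c₁*‖u 0‖^2 + (2*δ*c₁ + 1/4)*(e 0 + c₁) + 8*c₁*δ*(c₁*‖u 0‖^2)
      ≤ D * (6*c₁*‖u 0‖^2 + 2*c₁ + 2*e 0) := by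
    have hca : (0:ℝ) ≤ c₁*‖u 0‖^2 := mul_nonneg hc₁.le (sq_nonneg _)
    have hP1 : (0:ℝ) ≤ (5/4 - 6*(δ*c₁)) * (e 0 + c₁ + (8/7)*(c₁*‖u 0‖^2)) := by
      apply mul_nonneg (by linarith) (by nlinarith [he0])
    have hP2 : (0:ℝ) ≤ (c₁*‖u 0‖^2) * (1/16 - δ*c₁) := mul_nonneg hca (by linarith)
    rw [hDdef]
    nlinarith [hP1, hP2, hca]
  have h5 : (‖u 0‖ ^ 2 + (2*δ + 1/(4*c₁)) * (e 0 + c₁)) + 8*c₁*δ*‖u 0‖^2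
      ≤ (6*‖u 0‖^2 + 2 + 2*e 0/c₁) * D := by
    rw [← mul_le_mul_iff_right₀ hc₁]
    have hexp1 : c₁ * ((‖u 0‖ ^ 2 + (2*δ + 1/(4*c₁)) * (e 0 + c₁)) + 8*c₁*δ*‖u 0‖^2)
        = c₁*‖u 0‖^2 + (2*δ*c₁ + 1/4)*(e 0 + c₁) + 8*c₁*δ*(c₁*‖u 0‖^2) := by
      field_simp
    have hexp2 : c₁ * ((6*‖u 0‖^2 + 2 + 2*e 0/c₁) * D)
        = D * (6*c₁*‖u 0‖^2 + 2*c₁ + 2*e 0) := by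
      field_simp
    rw [hexp1, hexp2]
    exact hgoal'
  have hba : K + L * ‖u 0‖ ^ 2 ≤ 6*‖u 0‖^2 + 2 + 2*e 0/c₁ := by
    have heq : K + L * ‖u 0‖ ^ 2
        = ((‖u 0‖ ^ 2 + (2*δ + 1/(4*c₁)) * (e 0 + c₁)) + 8*c₁*δ*‖u 0‖^2) / D := by
      rw [hKdef, hLdef]; field_simp
    rw [heq, div_le_iff₀ hD]
    exact h5
  have hA0 : (0:ℝ) ≤ 6*‖u 0‖^2 + 2 + 2*e 0/c₁ := by
    have h1 : -(1 + (8/7)*‖u 0‖^2) ≤ e 0/c₁ := by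
      rw [le_div_iff₀ hc₁]
      nlinarith [he0]
    have h2 : 2*e 0/c₁ = 2*(e 0/c₁) := by ring
    rw [h2]
    nlinarith [sq_nonneg ‖u 0‖, h1]
  -- (9) conclusion
  intro n
  have hpow : (1+L)^n ≤ Real.exp (16 * c₁ * ((n:ℝ) + 1) * δ) := by
    have h1 : (1+L)^n ≤ (Real.exp L)^n :=
      pow_le_pow_left₀ (by linarith) (by linarith [Real.add_one_le_exp L]) n
    rw [← Real.exp_nat_mul] at h1
    refine h1.trans (Real.exp_le_exp.mpr ?_)
    have hn : (0:ℝ) ≤ (n:ℝ) := Nat.cast_nonneg n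
    nlinarith [ht, mul_le_mul_of_nonneg_left hL16 hn]
  have hpow0 : (0:ℝ) ≤ (1+L)^n := by positivity
  calc ‖u (n+1)‖ ^ 2 ≤ (K + L * ‖u 0‖ ^ 2) * (1+L)^n := (hab n).trans (hB n)
    _ ≤ (6*‖u 0‖^2 + 2 + 2*e 0/c₁) * (1+L)^n := mul_le_mul_of_nonneg_right hba hpow0
    _ ≤ (6*‖u 0‖^2 + 2 + 2*e 0/c₁) * Real.exp (16 * c₁ * ((n:ℝ) + 1) * δ) :=
        mul_le_mul_of_nonneg_left hpow hA0
end

section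
/- Let 𝓗 be a real Hilbert space with norm ‖·‖, let c₁ > 0, c₃ > 0, δ > 0, and let (uₙ)_{n≥0} be a sequence in 𝓗 such that for every n ≥ 0, (1/(2δ)) Σ_{j=0}^{n} ‖u_{j+1} - u_j‖² ≤ c₃ e^{16 c₁ n δ}. Define u^δ : [0,∞) → 𝓗 by u^δ(t) := uₙ for t ∈ [nδ, (n+1)δ). Then for all 0 ≤ t₁ < t₂ one has ‖u^δ(t₂) - u^δ(t₁)‖ ≤ √(2c₃) · √(t₂ - t₁ + δ) · e^{8 c₁ t₂}. -/
open Finset Set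

/-- Uniform Hölder-type time-equicontinuity estimate (4.7) for the piecewise constant
interpolant of the implicit Euler scheme:
`‖u^δ(t₂) - u^δ(t₁)‖ ≤ √(2c₃) √(t₂-t₁+δ) e^{8c₁t₂}` for `0 ≤ t₁ < t₂`. -/
theorem stmt4 {𝓗 : Type*} [NormedAddCommGroup 𝓗] [InnerProductSpace ℝ 𝓗]
    (c₁ c₃ δ : ℝ) (hc₁ : 0 < c₁) (hc₃ : 0 < c₃) (hδ : 0 < δ)
    (u : ℕ → 𝓗)
    (hest : ∀ n : ℕ,
      (1 / (2 * δ)) * ∑ j ∈ Finset.range (n + 1), ‖u (j + 1) - u j‖ ^ 2 ≤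
        c₃ * Real.exp (16 * c₁ * (n : ℝ) * δ))
    (uδ : ℝ → 𝓗)
    (huδ : ∀ n : ℕ, ∀ t ∈ Ico ((n : ℝ) * δ) (((n : ℝ) + 1) * δ), uδ t = u n) :
    ∀ t₁ t₂ : ℝ, 0 ≤ t₁ → t₁ < t₂ →
      ‖uδ t₂ - uδ t₁‖ ≤
        Real.sqrt (2 * c₃) * Real.sqrt (t₂ - t₁ + δ) * Real.exp (8 * c₁ * t₂) := by
  intro t₁ t₂ ht₁ ht
  have ht₂ : (0:ℝ) ≤ t₂ := ht₁.trans ht.le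
  -- evaluate the interpolant at floor indices
  have hval : ∀ t : ℝ, 0 ≤ t → uδ t = u ⌊t / δ⌋₊ := by
    intro t htnn
    refine huδ _ t ⟨?_, ?_⟩
    · rw [← le_div_iff₀ hδ]
      exact Nat.floor_le (div_nonneg htnn hδ.le)
    · rw [← div_lt_iff₀ hδ]
      exact Nat.lt_floor_add_one _
  set n₁ := ⌊t₁ / δ⌋₊ with hn₁def
  set n₂ := ⌊t₂ / δ⌋₊ with hn₂def
  have hv₁ : uδ t₁ = u n₁ := hval t₁ ht₁
  have hv₂ : uδ t₂ = u n₂ := hval t₂ ht₂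
  have hle : n₁ ≤ n₂ := Nat.floor_le_floor (by gcongr)
  have hRHSnn : 0 ≤ Real.sqrt (2 * c₃) * Real.sqrt (t₂ - t₁ + δ) * Real.exp (8 * c₁ * t₂) := by
    positivity
  rcases eq_or_lt_of_le hle with heq | hlt
  · rw [hv₁, hv₂, ← heq]
    simpa using hRHSnn
  -- nontrivial case : n₁ < n₂
  have hn₂pos : 1 ≤ n₂ := Nat.one_le_iff_ne_zero.mpr (by omega)
  -- telescoping
  have htel : u n₂ - u n₁ = ∑ j ∈ Finset.Ico n₁ n₂, (u (j + 1) - u j) := by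
    rw [Finset.sum_Ico_eq_sub _ hle, Finset.sum_range_sub, Finset.sum_range_sub]
    abel
  have hnorm : ‖u n₂ - u n₁‖ ≤ ∑ j ∈ Finset.Ico n₁ n₂, ‖u (j + 1) - u j‖ := by
    rw [htel]; exact norm_sum_le _ _
  -- Cauchy–Schwarz
  have hCS : (∑ j ∈ Finset.Ico n₁ n₂, ‖u (j + 1) - u j‖) ^ 2 ≤
      ((n₂ - n₁ : ℕ) : ℝ) * ∑ j ∈ Finset.Ico n₁ n₂, ‖u (j + 1) - u j‖ ^ 2 := by
    have := sq_sum_le_card_mul_sum_sq (s := Finset.Ico n₁ n₂)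
      (f := fun j => ‖u (j + 1) - u j‖)
    simpa [Nat.card_Ico] using this
  -- extend the sum and use the dissipation estimate at n = n₂ - 1
  have hsub : (∑ j ∈ Finset.Ico n₁ n₂, ‖u (j + 1) - u j‖ ^ 2) ≤
      ∑ j ∈ Finset.range n₂, ‖u (j + 1) - u j‖ ^ 2 := by
    refine Finset.sum_le_sum_of_subset_of_nonneg ?_ (fun i _ _ => by positivity)
    intro x hx
    simp only [Finset.mem_Ico] at hx
    exact Finset.mem_range.mpr hx.2
  have hest' : (∑ j ∈ Finset.range n₂, ‖u (j + 1) - u j‖ ^ 2) ≤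
      2 * δ * (c₃ * Real.exp (16 * c₁ * ((n₂ - 1 : ℕ) : ℝ) * δ)) := by
    have h := hest (n₂ - 1)
    rw [Nat.sub_add_cancel hn₂pos] at h
    rw [← le_div_iff₀' (by positivity)] at h
    calc (∑ j ∈ Finset.range n₂, ‖u (j + 1) - u j‖ ^ 2)
        ≤ c₃ * Real.exp (16 * c₁ * ((n₂ - 1 : ℕ) : ℝ) * δ) / (1 / (2 * δ)) := h
      _ = 2 * δ * (c₃ * Real.exp (16 * c₁ * ((n₂ - 1 : ℕ) : ℝ) * δ)) := by
          field_simp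
  -- bound the combinatorial quantities by the continuous ones
  have hn₂t₂ : (n₂ : ℝ) * δ ≤ t₂ := by
    rw [← le_div_iff₀ hδ]; exact Nat.floor_le (div_nonneg ht₂ hδ.le)
  have hexp : Real.exp (16 * c₁ * ((n₂ - 1 : ℕ) : ℝ) * δ) ≤ Real.exp (16 * c₁ * t₂) := by
    apply Real.exp_le_exp.mpr
    have h1 : ((n₂ - 1 : ℕ) : ℝ) * δ ≤ t₂ := by
      refine le_trans ?_ hn₂t₂
      gcongr
      exact_mod_cast Nat.sub_le n₂ 1
    calc 16 * c₁ * ((n₂ - 1 : ℕ) : ℝ) * δ = 16 * c₁ * (((n₂ - 1 : ℕ) : ℝ) * δ) := by ring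
      _ ≤ 16 * c₁ * t₂ := by gcongr
  have hcard : ((n₂ - n₁ : ℕ) : ℝ) * δ ≤ t₂ - t₁ + δ := by
    have h1 : t₁ < ((n₁ : ℝ) + 1) * δ := by
      rw [← div_lt_iff₀ hδ]; exact Nat.lt_floor_add_one _
    have h2 : ((n₂ - n₁ : ℕ) : ℝ) = (n₂ : ℝ) - (n₁ : ℝ) := Nat.cast_sub hle
    rw [h2]
    nlinarith
  -- put everything together
  have hsq : ‖u n₂ - u n₁‖ ^ 2 ≤ 2 * c₃ * (t₂ - t₁ + δ) * Real.exp (16 * c₁ * t₂) := by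
    calc ‖u n₂ - u n₁‖ ^ 2
        ≤ (∑ j ∈ Finset.Ico n₁ n₂, ‖u (j + 1) - u j‖) ^ 2 := by
          apply pow_le_pow_left₀ (norm_nonneg _) hnorm
      _ ≤ ((n₂ - n₁ : ℕ) : ℝ) * ∑ j ∈ Finset.Ico n₁ n₂, ‖u (j + 1) - u j‖ ^ 2 := hCS
      _ ≤ ((n₂ - n₁ : ℕ) : ℝ) * (2 * δ * (c₃ * Real.exp (16 * c₁ * ((n₂ - 1 : ℕ) : ℝ) * δ))) := by
          gcongr
          exact hsub.trans hest'
      _ = (((n₂ - n₁ : ℕ) : ℝ) * δ) * (2 * c₃ * Real.exp (16 * c₁ * ((n₂ - 1 : ℕ) : ℝ) * δ)) := by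
          ring
      _ ≤ (t₂ - t₁ + δ) * (2 * c₃ * Real.exp (16 * c₁ * t₂)) :=
          mul_le_mul hcard (by gcongr) (by positivity) (by linarith)
      _ = 2 * c₃ * (t₂ - t₁ + δ) * Real.exp (16 * c₁ * t₂) := by ring
  rw [hv₁, hv₂]
  have hRHSsq : (Real.sqrt (2 * c₃) * Real.sqrt (t₂ - t₁ + δ) * Real.exp (8 * c₁ * t₂)) ^ 2 =
      2 * c₃ * (t₂ - t₁ + δ) * Real.exp (16 * c₁ * t₂) := by
    rw [mul_pow, mul_pow, Real.sq_sqrt (by positivity), Real.sq_sqrt (by linarith),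
      sq, ← Real.exp_add]
    ring_nf
  calc ‖u n₂ - u n₁‖ = Real.sqrt (‖u n₂ - u n₁‖ ^ 2) := by
        rw [Real.sqrt_sq (norm_nonneg _)]
    _ ≤ Real.sqrt ((Real.sqrt (2 * c₃) * Real.sqrt (t₂ - t₁ + δ) * Real.exp (8 * c₁ * t₂)) ^ 2) := by
        apply Real.sqrt_le_sqrt
        rw [hRHSsq]; exact hsq
    _ = Real.sqrt (2 * c₃) * Real.sqrt (t₂ - t₁ + δ) * Real.exp (8 * c₁ * t₂) :=
        Real.sqrt_sq hRHSnn
end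

section
/- Let 𝓗 be a real Hilbert space with norm ‖·‖, let c₁ > 0, c₃ > 0, δ > 0, and let (uₙ)_{n≥0} be a sequence in 𝓗 such that for every n ≥ 0, (1/(2δ)) Σ_{j=0}^{n} ‖u_{j+1} - u_j‖² ≤ c₃ e^{16 c₁ n δ}. Define A^δ : [0,∞) → 𝓗 by A^δ(t) := (uₙ - u_{n-1})/δ for t ∈ [nδ, (n+1)δ) with n ≥ 1, and A^δ(t) := 0 for t ∈ [0, δ). Then for every t > 0, ∫_0^t ‖A^δ(s)‖² ds ≤ 2 c₃ e^{16 c₁ t}. -/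
/-!
`A^δ` is constant on every cell `[kδ, (k+1)δ)`, so with `M = ⌊t/δ⌋` the integral up to the grid
point `(M+1)δ ≥ t` is the exact Riemann sum `δ ∑_{k ≤ M} ‖A^δ(kδ)‖² = δ⁻¹ ∑_{j < M} ‖u_{j+1} - u_j‖²`.
The hypothesis at `n = M` bounds this by `2c₃ e^{16c₁Mδ}`, and `Mδ ≤ t`.
-/

open Finset Set MeasureTheory

section StepFunction

variable {E : Type*} [NormedAddCommGroup E] {f : ℝ → E} {a b δ : ℝ} {c : E}

theorem intervalIntegrable_of_eqOn_Ico (hab : a ≤ b) (h : EqOn f (fun _ => c) (Ico a b)) :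
    IntervalIntegrable f volume a b :=
  (intervalIntegrable_iff_integrableOn_Ioo_of_le hab).2 <|
    (integrableOn_const measure_Ioo_lt_top.ne).congr_fun
      (h.mono Set.Ioo_subset_Ico_self).symm measurableSet_Ioo

theorem intervalIntegral_eq_smul_of_eqOn_Ico [NormedSpace ℝ E] [CompleteSpace E] (hab : a ≤ b)
    (h : EqOn f (fun _ => c) (Ico a b)) : ∫ x in a..b, f x = (b - a) • c := by
  rw [intervalIntegral.integral_of_le hab, integral_Ioc_eq_integral_Ioo,
    setIntegral_congr_fun measurableSet_Ioo (h.mono Set.Ioo_subset_Ico_self), setIntegral_const,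
    Real.volume_real_Ioo_of_le hab]

theorem intervalIntegrable_grid_cell (hδ : 0 ≤ δ)
    (hf : ∀ k : ℕ, EqOn f (fun _ => f (k * δ)) (Ico (k * δ) ((k + 1) * δ))) (k : ℕ) :
    IntervalIntegrable f volume (k * δ) ((k + 1 : ℕ) * δ) := by
  push_cast
  exact intervalIntegrable_of_eqOn_Ico (by nlinarith) (hf k)

theorem intervalIntegrable_of_eqOn_grid (hδ : 0 ≤ δ)
    (hf : ∀ k : ℕ, EqOn f (fun _ => f (k * δ)) (Ico (k * δ) ((k + 1) * δ))) (n : ℕ) :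
    IntervalIntegrable f volume 0 (n * δ) := by
  simpa using IntervalIntegrable.trans_iterate (a := fun k : ℕ => (k : ℝ) * δ) (n := n)
    fun k _ => intervalIntegrable_grid_cell hδ hf k

theorem intervalIntegral_eq_smul_sum_of_eqOn_grid [NormedSpace ℝ E] [CompleteSpace E] (hδ : 0 ≤ δ)
    (hf : ∀ k : ℕ, EqOn f (fun _ => f (k * δ)) (Ico (k * δ) ((k + 1) * δ))) (n : ℕ) :
    ∫ x in 0..n * δ, f x = δ • ∑ k ∈ range n, f (k * δ) := by
  have hcell (k : ℕ) : ∫ x in k * δ..(k + 1 : ℕ) * δ, f x = δ • f (k * δ) := by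
    push_cast
    rw [intervalIntegral_eq_smul_of_eqOn_Ico (by nlinarith) (hf k)]
    ring_nf
  rw [smul_sum, ← sum_congr rfl fun k _ => hcell k]
  simpa using (intervalIntegral.sum_integral_adjacent_intervals (a := fun k : ℕ => (k : ℝ) * δ)
    (n := n) fun k _ => intervalIntegrable_grid_cell hδ hf k).symm

end StepFunction

/-- Estimate (4.11) from the proof of Lemma 4.1: the piecewise constant discrete
time-derivative `A^δ` of the implicit Euler iterates satisfies
`∫₀ᵗ ‖A^δ(s)‖² ds ≤ 2c₃ e^{16c₁t}` for every `t > 0`. -/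
theorem stmt5 {𝓗 : Type*} [NormedAddCommGroup 𝓗] [InnerProductSpace ℝ 𝓗]
    (c₁ c₃ δ : ℝ) (hc₁ : 0 < c₁) (hc₃ : 0 < c₃) (hδ : 0 < δ)
    (u : ℕ → 𝓗)
    (hest : ∀ n : ℕ,
      (1 / (2 * δ)) * ∑ j ∈ Finset.range (n + 1), ‖u (j + 1) - u j‖ ^ 2 ≤
        c₃ * Real.exp (16 * c₁ * (n : ℝ) * δ))
    (A : ℝ → 𝓗)
    (hA : ∀ n : ℕ, 1 ≤ n → ∀ t ∈ Ico ((n : ℝ) * δ) (((n : ℝ) + 1) * δ),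
      A t = (1 / δ) • (u n - u (n - 1)))
    (hA0 : ∀ t ∈ Ico (0 : ℝ) δ, A t = 0) :
    ∀ t : ℝ, 0 < t →
      (∫ s in (0 : ℝ)..t, ‖A s‖ ^ 2) ≤ 2 * c₃ * Real.exp (16 * c₁ * t) := by
  intro t ht
  set M := ⌊t / δ⌋₊
  have hMt : M * δ ≤ t := (le_div_iff₀ hδ).1 (Nat.floor_le (div_pos ht hδ).le)
  have htM : t ≤ (M + 1 : ℕ) * δ := by
    push_cast
    exact (div_le_iff₀ hδ).1 (Nat.lt_floor_add_one _).le
  have hAstep (k : ℕ) : EqOn (fun s => ‖A s‖ ^ 2) (fun _ => ‖A (k * δ)‖ ^ 2)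
      (Ico (k * δ) ((k + 1) * δ)) := by
    intro s hs
    have hkδ : (k : ℝ) * δ ∈ Ico (k * δ) ((k + 1) * δ) := ⟨le_rfl, by linarith⟩
    rcases Nat.eq_zero_or_pos k with rfl | hk
    · simp only [CharP.cast_eq_zero, zero_add, one_mul, zero_mul] at hs hkδ ⊢
      rw [hA0 s hs, hA0 0 hkδ]
    · simp only [hA k hk s hs, hA k hk _ hkδ]
  have hAcell (k : ℕ) : ‖A ((k + 1 : ℕ) * δ)‖ ^ 2 = ‖u (k + 1) - u k‖ ^ 2 / δ ^ 2 := by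
    rw [hA (k + 1) k.succ_pos _ ⟨le_rfl, by push_cast; linarith⟩, norm_smul, mul_pow,
      Real.norm_eq_abs, sq_abs, Nat.add_sub_cancel]
    ring
  calc ∫ s in (0 : ℝ)..t, ‖A s‖ ^ 2
      ≤ ∫ s in (0 : ℝ)..(M + 1 : ℕ) * δ, ‖A s‖ ^ 2 :=
        intervalIntegral.integral_mono_interval le_rfl ht.le htM (.of_forall fun s => sq_nonneg _)
          (intervalIntegrable_of_eqOn_grid hδ.le hAstep _)
    _ = δ * ∑ k ∈ range (M + 1), ‖A (k * δ)‖ ^ 2 :=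
        intervalIntegral_eq_smul_sum_of_eqOn_grid hδ.le hAstep _
    _ = 2 * ((1 / (2 * δ)) * ∑ j ∈ range M, ‖u (j + 1) - u j‖ ^ 2) := by
        rw [sum_range_succ', Nat.cast_zero, zero_mul, hA0 0 ⟨le_rfl, hδ⟩, norm_zero,
          zero_pow two_ne_zero, add_zero, mul_sum, mul_sum, mul_sum]
        refine sum_congr rfl fun j _ => ?_
        rw [hAcell]
        field_simp
    _ ≤ 2 * ((1 / (2 * δ)) * ∑ j ∈ range (M + 1), ‖u (j + 1) - u j‖ ^ 2) := by
        gcongr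
        exact M.le_succ
    _ ≤ 2 * (c₃ * Real.exp (16 * c₁ * M * δ)) := by gcongr 2 * ?_; exact hest M
    _ ≤ 2 * c₃ * Real.exp (16 * c₁ * t) := by
        rw [← mul_assoc, mul_assoc (16 * c₁)]
        gcongr
end

section
/- With the notation and hypotheses of the context, for every continuously differentiable v : [-L,L] → ℝ with v(x) ≥ -H for all x, one has (1/2) ∫_{-L}^{L} ∫_{-H-d}^{v(x)} σ(x,z) |∇h_v(x,z)|² dz dx ≤ (d+1) σ_max ∫_{-L}^{L} [ (3/2)(m₁ + m₂ v(x)²) + m₃ v'(x)² ] dx, where |∇h_v(x,z)|² := (∂_x h_i(x,z,v(x)) + ∂_w h_i(x,z,v(x)) v'(x))² + (∂_z h_i(x,z,v(x)))², with i = 1 for z ∈ (-H-d,-H) and i = 2 for z ∈ (-H, v(x)). -/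
open MeasureTheory Set

/-! Pointwise `(p + q v')² + r² ≤ 2 (p² + r²) + 2 q² v'²`, so the bounds on the derivatives of
`h₁` make the energy density at most `2 σ_max (m₁ + m₂ v² + m₃ v'²)` on the strip of width `d`
below `-H`, and those of `h₂` make it at most the same quantity divided by `H + v` on the column
`(-H, v]` of height `H + v`. Each vertical column thus carries energy at most
`2 (d + 1) σ_max (m₁ + m₂ v² + m₃ v'²)`, and integrating in `x` gives the claim. -/

theorem sq_add_mul_add_sq_le {p q r c A B : ℝ} (hA : 0 ≤ A) (hB : 0 ≤ B)
    (hpr : |p| + |r| ≤ √A) (hq : |q| ≤ √B) :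
    (p + q * c) ^ 2 + r ^ 2 ≤ 2 * (A + B * c ^ 2) := by
  have hpr' : p ^ 2 + r ^ 2 ≤ A := by
    have := (Real.le_sqrt (by positivity) hA).1 hpr
    nlinarith [sq_abs p, sq_abs r, abs_nonneg p, abs_nonneg r]
  have hq' : q ^ 2 ≤ B := by simpa only [sq_abs] using (Real.le_sqrt (abs_nonneg q) hB).1 hq
  calc (p + q * c) ^ 2 + r ^ 2 ≤ 2 * (p ^ 2 + (q * c) ^ 2) + 2 * r ^ 2 := by
        gcongr
        · exact add_sq_le
        · linarith [sq_nonneg r]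
    _ = 2 * (p ^ 2 + r ^ 2) + 2 * (q ^ 2 * c ^ 2) := by ring
    _ ≤ 2 * (A + B * c ^ 2) := by nlinarith [sq_nonneg c]

-- Only the majorant has to be integrable: the energy density need not even be measurable.
theorem intervalIntegral.integral_mono_of_nonneg {f g : ℝ → ℝ} {a b : ℝ} {μ : Measure ℝ}
    (hab : a ≤ b) (hf : ∀ x ∈ Ioc a b, 0 ≤ f x) (hfg : ∀ x ∈ Ioc a b, f x ≤ g x)
    (hg : IntervalIntegrable g μ a b) :
    ∫ x in a..b, f x ∂μ ≤ ∫ x in a..b, g x ∂μ := by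
  rw [integral_of_le hab, integral_of_le hab]
  exact MeasureTheory.integral_mono_of_nonneg (ae_restrict_of_forall_mem measurableSet_Ioc hf)
    hg.1 (ae_restrict_of_forall_mem measurableSet_Ioc hfg)

theorem intervalIntegral.integral_le_of_le_piecewise_const {f : ℝ → ℝ} {a b c C₁ C₂ : ℝ}
    (hab : a ≤ b) (hbc : b ≤ c) (hf : ∀ z ∈ Ioc a c, 0 ≤ f z)
    (hf₁ : ∀ z ∈ Ioc a b, f z ≤ C₁) (hf₂ : ∀ z ∈ Ioc b c, f z ≤ C₂) :
    ∫ z in a..c, f z ≤ (b - a) * C₁ + (c - b) * C₂ := by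
  set g : ℝ → ℝ := fun z => if z ≤ b then C₁ else C₂
  have hg₁ : EqOn (fun _ => C₁) g (uIoc a b) := fun z hz => by
    rw [uIoc_of_le hab] at hz
    exact (if_pos hz.2).symm
  have hg₂ : EqOn (fun _ => C₂) g (uIoc b c) := fun z hz => by
    rw [uIoc_of_le hbc] at hz
    exact (if_neg (not_le.2 hz.1)).symm
  have hi₁ : IntervalIntegrable g volume a b := intervalIntegrable_const.congr hg₁
  have hi₂ : IntervalIntegrable g volume b c := intervalIntegrable_const.congr hg₂
  calc ∫ z in a..c, f z ≤ ∫ z in a..c, g z := by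
        refine integral_mono_of_nonneg (hab.trans hbc) hf (fun z hz => ?_) (hi₁.trans hi₂)
        by_cases hzb : z ≤ b
        · simpa only [g, if_pos hzb] using hf₁ z ⟨hz.1, hzb⟩
        · simpa only [g, if_neg hzb] using hf₂ z ⟨not_le.1 hzb, hz.2⟩
    _ = (∫ z in a..b, C₁) + ∫ z in b..c, C₂ := by
        rw [← integral_add_adjacent_intervals hi₁ hi₂,
          ← integral_congr_ae (ae_of_all _ hg₁), ← integral_congr_ae (ae_of_all _ hg₂)]
    _ = (b - a) * C₁ + (c - b) * C₂ := by simp only [integral_const, smul_eq_mul]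

theorem integral_energy_density_mem_Icc {H d σmax A B w c : ℝ} {s P₁ Q₁ R₁ P₂ Q₂ R₂ : ℝ → ℝ}
    (hd : 0 ≤ d) (hσmax : 0 ≤ σmax) (hw : -H ≤ w) (hA : 0 ≤ A) (hB : 0 ≤ B)
    (hs : ∀ z ∈ Icc (-H - d) w, 0 ≤ s z ∧ s z ≤ σmax)
    (h₁ : ∀ z ∈ Ioc (-H - d) (-H), |P₁ z| + |R₁ z| ≤ √A ∧ |Q₁ z| ≤ √B)
    (h₂ : ∀ z ∈ Ioc (-H) w, |P₂ z| + |R₂ z| ≤ √(A / (H + w)) ∧ |Q₂ z| ≤ √(B / (H + w))) :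
    ∫ z in (-H - d)..w, s z * (if z ≤ -H then (P₁ z + Q₁ z * c) ^ 2 + R₁ z ^ 2
        else (P₂ z + Q₂ z * c) ^ 2 + R₂ z ^ 2)
      ∈ Icc 0 (2 * (d + 1) * σmax * (A + B * c ^ 2)) := by
  have hHw : 0 ≤ H + w := by linarith
  have hdens : ∀ z ∈ Icc (-H - d) w, 0 ≤ s z * (if z ≤ -H then (P₁ z + Q₁ z * c) ^ 2 + R₁ z ^ 2
      else (P₂ z + Q₂ z * c) ^ 2 + R₂ z ^ 2) := fun z hz =>
    mul_nonneg (hs z hz).1 (by split_ifs <;> positivity)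
  refine ⟨intervalIntegral.integral_nonneg (by linarith) hdens, ?_⟩
  set E := σmax * (2 * (A + B * c ^ 2))
  have hE : 0 ≤ E := by positivity
  calc _ ≤ (-H - (-H - d)) * E + (w - -H) * (E / (H + w)) := by
        refine intervalIntegral.integral_le_of_le_piecewise_const (by linarith) hw
          (fun z hz => hdens z (Ioc_subset_Icc_self hz)) (fun z hz => ?_) (fun z hz => ?_)
        · rw [if_pos hz.2]
          have hsz := hs z ⟨hz.1.le, by linarith [hz.2]⟩
          exact mul_le_mul hsz.2 (sq_add_mul_add_sq_le hA hB (h₁ z hz).1 (h₁ z hz).2)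
            (by positivity) hσmax
        · rw [if_neg (not_le.2 hz.1)]
          have hsz := hs z ⟨by linarith [hz.1], hz.2⟩
          have := sq_add_mul_add_sq_le (c := c) (div_nonneg hA hHw) (div_nonneg hB hHw)
            (h₂ z hz).1 (h₂ z hz).2
          exact (mul_le_mul hsz.2 this (by positivity) hσmax).trans_eq (by ring)
    _ ≤ d * E + E := by
        rw [show w - -H = H + w by ring, show -H - (-H - d) = d by ring]
        gcongr
        rcases hHw.eq_or_lt with h | h
        · rw [← h, zero_mul]
          exact hE
        · rw [mul_div_cancel₀ _ h.ne']
    _ = 2 * (d + 1) * σmax * (A + B * c ^ 2) := by ring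

theorem stmt6_general (L H d σmax m₁ m₂ m₃ : ℝ)
    (hL : 0 < L) (hd : 0 < d) (hσmax : 0 < σmax)
    (hm₁ : 0 < m₁) (hm₂ : 0 < m₂) (hm₃ : 0 < m₃)
    (σ : ℝ → ℝ → ℝ)
    (hσ : ∀ x ∈ Icc (-L) L, ∀ z ∈ Ici (-H - d), 0 ≤ σ x z ∧ σ x z ≤ σmax)
    (h₁x h₁z h₁w h₂x h₂z h₂w : ℝ → ℝ → ℝ → ℝ)
    (hb₁ : ∀ x ∈ Icc (-L) L, ∀ z ∈ Icc (-H - d) (-H), ∀ w ∈ Ici (-H),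
      |h₁x x z w| + |h₁z x z w| ≤ Real.sqrt (m₁ + m₂ * w ^ 2) ∧
      |h₁w x z w| ≤ Real.sqrt m₃)
    (hb₂ : ∀ x ∈ Icc (-L) L, ∀ w ∈ Ici (-H), ∀ z ∈ Icc (-H) w,
      |h₂x x z w| + |h₂z x z w| ≤ Real.sqrt ((m₁ + m₂ * w ^ 2) / (H + w)) ∧
      |h₂w x z w| ≤ Real.sqrt (m₃ / (H + w)))
    (v v' : ℝ → ℝ)
    (hv : ∀ x ∈ Icc (-L) L, HasDerivWithinAt v (v' x) (Icc (-L) L) x)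
    (hv'c : ContinuousOn v' (Icc (-L) L))
    (hvH : ∀ x ∈ Icc (-L) L, -H ≤ v x) :
    (1 / 2) * ∫ x in (-L)..L, (∫ z in (-H - d)..(v x),
        σ x z * (if z ≤ -H then
            (h₁x x z (v x) + h₁w x z (v x) * v' x) ^ 2 + (h₁z x z (v x)) ^ 2
          else
            (h₂x x z (v x) + h₂w x z (v x) * v' x) ^ 2 + (h₂z x z (v x)) ^ 2))
      ≤ (d + 1) * σmax *
          ∫ x in (-L)..L, ((3 / 2) * (m₁ + m₂ * (v x) ^ 2) + m₃ * (v' x) ^ 2) := by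
  have hLL : -L ≤ L := by linarith
  have hvc : ContinuousOn v (Icc (-L) L) := fun x hx => (hv x hx).continuousWithinAt
  have hbound : IntervalIntegrable
      (fun x => 2 * (d + 1) * σmax * ((3 / 2) * (m₁ + m₂ * v x ^ 2) + m₃ * v' x ^ 2))
      volume (-L) L :=
    ContinuousOn.intervalIntegrable_of_Icc hLL (by fun_prop)
  have hcolumn : ∀ x ∈ Icc (-L) L, ∫ z in (-H - d)..(v x),
      σ x z * (if z ≤ -H then
          (h₁x x z (v x) + h₁w x z (v x) * v' x) ^ 2 + (h₁z x z (v x)) ^ 2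
        else
          (h₂x x z (v x) + h₂w x z (v x) * v' x) ^ 2 + (h₂z x z (v x)) ^ 2)
      ∈ Icc 0 (2 * (d + 1) * σmax * ((m₁ + m₂ * v x ^ 2) + m₃ * v' x ^ 2)) := fun x hx =>
    integral_energy_density_mem_Icc hd.le hσmax.le (hvH x hx) (by positivity) hm₃.le
      (fun z hz => hσ x hx z hz.1)
      (fun z hz => hb₁ x hx z (Ioc_subset_Icc_self hz) (v x) (hvH x hx))
      (fun z hz => hb₂ x hx (v x) (hvH x hx) z (Ioc_subset_Icc_self hz))
  calc _ ≤ (1 / 2) * ∫ x in (-L)..L,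
        2 * (d + 1) * σmax * ((3 / 2) * (m₁ + m₂ * v x ^ 2) + m₃ * v' x ^ 2) := by
        gcongr
        refine intervalIntegral.integral_mono_of_nonneg hLL
          (fun x hx => (hcolumn x (Ioc_subset_Icc_self hx)).1)
          (fun x hx => (hcolumn x (Ioc_subset_Icc_self hx)).2.trans ?_) hbound
        have : 0 ≤ m₁ + m₂ * v x ^ 2 := by positivity
        gcongr
        linarith
    _ = _ := by rw [intervalIntegral.integral_const_mul]; ring

/-- The Dirichlet-energy bound for the boundary-data extension `h_v` from the proof of
Lemma 3.4: for `v ≥ -H`,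
`(1/2) ∫_D ∫_{-H-d}^{v(x)} σ |∇h_v|² dz dx
  ≤ (d+1) σ_max ∫_D [ (3/2)(m₁ + m₂ v²) + m₃ (v')² ] dx`,
where `|∇h_v|² = (∂_x h_i + ∂_w h_i v')² + (∂_z h_i)²`, with `i = 1` for
`z ∈ (-H-d,-H)` and `i = 2` for `z ∈ (-H, v(x))`. -/
theorem stmt6 (L H d σmax m₁ m₂ m₃ : ℝ)
    (hL : 0 < L) (hH : 0 < H) (hd : 0 < d) (hσmax : 0 < σmax)
    (hm₁ : 0 < m₁) (hm₂ : 0 < m₂) (hm₃ : 0 < m₃)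
    (σ : ℝ → ℝ → ℝ)
    (hσmeas : Measurable (Function.uncurry σ))
    (hσ : ∀ x ∈ Icc (-L) L, ∀ z ∈ Ici (-H - d), 0 ≤ σ x z ∧ σ x z ≤ σmax)
    (h₁x h₁z h₁w h₂x h₂z h₂w : ℝ → ℝ → ℝ → ℝ)
    (hb₁ : ∀ x ∈ Icc (-L) L, ∀ z ∈ Icc (-H - d) (-H), ∀ w ∈ Ici (-H),
      |h₁x x z w| + |h₁z x z w| ≤ Real.sqrt (m₁ + m₂ * w ^ 2) ∧
      |h₁w x z w| ≤ Real.sqrt m₃)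
    (hb₂ : ∀ x ∈ Icc (-L) L, ∀ w ∈ Ici (-H), ∀ z ∈ Icc (-H) w,
      |h₂x x z w| + |h₂z x z w| ≤ Real.sqrt ((m₁ + m₂ * w ^ 2) / (H + w)) ∧
      |h₂w x z w| ≤ Real.sqrt (m₃ / (H + w)))
    (v v' : ℝ → ℝ)
    (hv : ∀ x ∈ Icc (-L) L, HasDerivWithinAt v (v' x) (Icc (-L) L) x)
    (hv'c : ContinuousOn v' (Icc (-L) L))
    (hvH : ∀ x ∈ Icc (-L) L, -H ≤ v x) :
    (1 / 2) * ∫ x in (-L)..L, (∫ z in (-H - d)..(v x),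
        σ x z * (if z ≤ -H then
            (h₁x x z (v x) + h₁w x z (v x) * v' x) ^ 2 + (h₁z x z (v x)) ^ 2
          else
            (h₂x x z (v x) + h₂w x z (v x) * v' x) ^ 2 + (h₂z x z (v x)) ^ 2))
      ≤ (d + 1) * σmax *
          ∫ x in (-L)..L, ((3 / 2) * (m₁ + m₂ * (v x) ^ 2) + m₃ * (v' x) ^ 2) :=
  stmt6_general L H d σmax m₁ m₂ m₃ hL hd hσmax hm₁ hm₂ hm₃ σ hσ h₁x h₁z h₁w h₂x h₂z h₂w hb₁ hb₂ v
    v' hv hv'c hvH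
end

section
/- With the notation and hypotheses of the context, suppose in addition that v(-L) = v(L) = 0, v'(-L) = v'(L) = 0, and v' is absolutely continuous with derivative v'' ∈ L²(-L,L). Then there is a constant c > 0 depending only on L, H, d, σ_max, m₁, m₂, m₃ such that (1/2) ∫_{-L}^{L} ∫_{-H-d}^{v(x)} σ(x,z) |∇h_v(x,z)|² dz dx ≤ c (1 + ‖v‖₂ ‖v''‖₂), where ‖·‖₂ denotes the L²(-L,L) norm. -/
open MeasureTheory Set
open scoped Interval

/-!
On the lower layer `[-H-d, -H]` the squared gradient is at most `2(m₁ + m₂ v²) + 2 m₃ v'²`, and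
on the upper layer `[-H, v]` it is at most the same quantity divided by `H + v`, which is exactly
compensated by the thickness `H + v` of that layer. Integrating in `x` leaves a combination of
`1`, `‖v‖₂²` and `‖v'‖₂²`. The Poincaré inequality `‖v‖₂ ≤ 2L ‖v'‖₂` and the interpolation
`‖v'‖₂² = -∫ v v'' ≤ ‖v‖₂ ‖v''‖₂` (integration by parts, `v'` being absolutely continuous) bound
both norms by `‖v‖₂ ‖v''‖₂`.
-/

theorem abs_integral_mul_le_sqrt_mul_sqrt {α : Type*} [MeasurableSpace α] {μ : Measure α}
    {f g : α → ℝ} (hf : MemLp f 2 μ) (hg : MemLp g 2 μ) :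
    |∫ x, f x * g x ∂μ| ≤ √(∫ x, f x ^ 2 ∂μ) * √(∫ x, g x ^ 2 ∂μ) := by
  have hsq (h : α → ℝ) : ∫ x, ‖h x‖ ^ (2 : ℝ) ∂μ = ∫ x, h x ^ 2 ∂μ := by
    simp only [Real.rpow_two, Real.norm_eq_abs, sq_abs]
  calc |∫ x, f x * g x ∂μ| ≤ ∫ x, ‖f x‖ * ‖g x‖ ∂μ := by
        simpa only [norm_mul, Real.norm_eq_abs] using
          norm_integral_le_integral_norm (fun x => f x * g x)
    _ ≤ (∫ x, ‖f x‖ ^ (2 : ℝ) ∂μ) ^ (1 / (2 : ℝ)) * (∫ x, ‖g x‖ ^ (2 : ℝ) ∂μ) ^ (1 / (2 : ℝ)) :=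
        integral_mul_norm_le_Lp_mul_Lq .two_two (by simpa using hf) (by simpa using hg)
    _ = √(∫ x, f x ^ 2 ∂μ) * √(∫ x, g x ^ 2 ∂μ) := by
        rw [hsq f, hsq g, Real.sqrt_eq_rpow, Real.sqrt_eq_rpow]

theorem IntervalIntegrable.memLp_two_restrict_Ioc {a b : ℝ} {f : ℝ → ℝ}
    (hf : IntervalIntegrable f volume a b)
    (hf2 : IntervalIntegrable (fun x => f x ^ 2) volume a b) :
    MemLp f 2 (volume.restrict (Ioc a b)) :=
  (memLp_two_iff_integrable_sq hf.1.aestronglyMeasurable).2 hf2.1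

section Interval

variable {a b : ℝ} {v v' v'' : ℝ → ℝ}

theorem sq_le_mul_integral_deriv_sq (hab : a ≤ b)
    (hv : ∀ x ∈ Icc a b, HasDerivWithinAt v (v' x) (Icc a b) x)
    (hv' : ContinuousOn v' (Icc a b)) (hva : v a = 0) :
    v b ^ 2 ≤ (b - a) * ∫ x in a..b, v' x ^ 2 := by
  have hftc : v b = ∫ x in Ioc a b, 1 * v' x := by
    rw [← intervalIntegral.integral_of_le hab]
    simp only [one_mul]
    rw [intervalIntegral.integral_eq_sub_of_hasDerivAt_of_le hab
      (fun x hx => (hv x hx).continuousWithinAt)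
      (fun x hx => (hv x (Ioo_subset_Icc_self hx)).hasDerivAt (Icc_mem_nhds hx.1 hx.2))
      (hv'.intervalIntegrable_of_Icc hab), hva, sub_zero]
  have hcs := abs_integral_mul_le_sqrt_mul_sqrt (memLp_const (1 : ℝ))
    ((hv'.intervalIntegrable_of_Icc hab).memLp_two_restrict_Ioc
      ((hv'.pow 2).intervalIntegrable_of_Icc hab))
  have hlen : ∫ _ in Ioc a b, (1 : ℝ) ^ 2 = b - a := by simp [hab]
  rw [← hftc, hlen, ← intervalIntegral.integral_of_le hab] at hcs
  have hS : 0 ≤ ∫ x in a..b, v' x ^ 2 :=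
    intervalIntegral.integral_nonneg hab fun x _ => sq_nonneg _
  calc v b ^ 2 = |v b| ^ 2 := (sq_abs _).symm
    _ ≤ (√(b - a) * √(∫ x in a..b, v' x ^ 2)) ^ 2 := pow_le_pow_left₀ (abs_nonneg _) hcs 2
    _ = (b - a) * ∫ x in a..b, v' x ^ 2 := by
        rw [mul_pow, Real.sq_sqrt (sub_nonneg.2 hab), Real.sq_sqrt hS]

theorem integral_sq_le_sq_mul_integral_deriv_sq (hab : a ≤ b)
    (hv : ∀ x ∈ Icc a b, HasDerivWithinAt v (v' x) (Icc a b) x)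
    (hv' : ContinuousOn v' (Icc a b)) (hva : v a = 0) :
    ∫ x in a..b, v x ^ 2 ≤ (b - a) ^ 2 * ∫ x in a..b, v' x ^ 2 := by
  have hvc : ContinuousOn v (Icc a b) := fun x hx => (hv x hx).continuousWithinAt
  have hv'2 : IntervalIntegrable (fun t => v' t ^ 2) volume a b :=
    (hv'.pow 2).intervalIntegrable_of_Icc hab
  have hpointwise : ∀ x ∈ Icc a b, v x ^ 2 ≤ (b - a) * ∫ t in a..b, v' t ^ 2 := by
    intro x hx
    have hsub : Icc a x ⊆ Icc a b := Icc_subset_Icc_right hx.2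
    calc v x ^ 2 ≤ (x - a) * ∫ t in a..x, v' t ^ 2 :=
          sq_le_mul_integral_deriv_sq hx.1 (fun t ht => (hv t (hsub ht)).mono hsub)
            (hv'.mono hsub) hva
      _ ≤ (b - a) * ∫ t in a..b, v' t ^ 2 := by
          refine mul_le_mul (by linarith [hx.2]) ?_
            (intervalIntegral.integral_nonneg hx.1 fun t _ => sq_nonneg _) (by linarith [hx.1])
          exact intervalIntegral.integral_mono_interval le_rfl hx.1 hx.2
            (Filter.Eventually.of_forall fun t => sq_nonneg _) hv'2
  calc ∫ x in a..b, v x ^ 2 ≤ ∫ _ in a..b, (b - a) * ∫ t in a..b, v' t ^ 2 :=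
        intervalIntegral.integral_mono_on hab
          ((hvc.pow 2).intervalIntegrable_of_Icc hab) intervalIntegrable_const hpointwise
    _ = (b - a) ^ 2 * ∫ x in a..b, v' x ^ 2 := by
        rw [intervalIntegral.integral_const, smul_eq_mul]; ring

theorem integral_deriv_sq_eq_neg_integral_mul (hab : a ≤ b)
    (hv : ∀ x ∈ Icc a b, HasDerivWithinAt v (v' x) (Icc a b) x)
    (hv' : ContinuousOn v' (Icc a b)) (hva : v a = 0) (hvb : v b = 0)
    (hrep : ∀ x ∈ Icc a b, v' x = v' a + ∫ t in a..x, v'' t)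
    (hv'' : IntervalIntegrable v'' volume a b) :
    ∫ x in a..b, v' x ^ 2 = -∫ x in a..b, v x * v'' x := by
  -- `w = v'` on `[a, b]`, and `w` is absolutely continuous, so integration by parts applies
  let w : ℝ → ℝ := fun x => v' a + ∫ t in a..x, v'' t
  obtain ⟨C, hC⟩ := isCompact_Icc.exists_bound_of_continuousOn hv'
  have hv_ac : AbsolutelyContinuousOnInterval v a b := by
    refine LipschitzOnWith.absolutelyContinuousOnInterval (K := ⟨max C 0, le_max_right _ _⟩) ?_
    rw [uIcc_of_le hab]
    exact (convex_Icc a b).lipschitzOnWith_of_nnnorm_hasDerivWithin_le hv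
      fun x hx => (hC x hx).trans (le_max_left _ _)
  have hw_ac : AbsolutelyContinuousOnInterval w a b :=
    ((LipschitzWith.const (v' a)).lipschitzOnWith.absolutelyContinuousOnInterval).add
      (hv''.absolutelyContinuousOnInterval_intervalIntegral left_mem_uIcc)
  have hderiv_w : ∀ᵐ x, x ∈ Ι a b → v x * v'' x = v x * deriv w x := by
    filter_upwards [hv''.ae_hasDerivAt_integral] with x hx hxI
    rw [((hx (uIoc_subset_uIcc hxI) a left_mem_uIcc).const_add (v' a)).deriv]
  have hderiv_v : ∀ᵐ x, x ∈ Ι a b → v' x ^ 2 = deriv v x * w x := by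
    filter_upwards [Measure.ae_ne volume b] with x hxb hxI
    rw [uIoc_of_le hab] at hxI
    have hxI' : x ∈ Ioo a b := ⟨hxI.1, lt_of_le_of_ne hxI.2 hxb⟩
    rw [((hv x (Ioo_subset_Icc_self hxI')).hasDerivAt (Icc_mem_nhds hxI'.1 hxI'.2)).deriv,
      sq, hrep x (Ioc_subset_Icc_self hxI)]
  rw [intervalIntegral.integral_congr_ae hderiv_w, intervalIntegral.integral_congr_ae hderiv_v,
    hv_ac.integral_mul_deriv_eq_deriv_mul hw_ac, hva, hvb]
  ring

theorem integral_deriv_sq_le_sqrt_mul_sqrt (hab : a ≤ b)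
    (hv : ∀ x ∈ Icc a b, HasDerivWithinAt v (v' x) (Icc a b) x)
    (hv' : ContinuousOn v' (Icc a b)) (hva : v a = 0) (hvb : v b = 0)
    (hrep : ∀ x ∈ Icc a b, v' x = v' a + ∫ t in a..x, v'' t)
    (hv'' : IntervalIntegrable v'' volume a b)
    (hv''2 : IntervalIntegrable (fun t => v'' t ^ 2) volume a b) :
    ∫ x in a..b, v' x ^ 2 ≤ √(∫ x in a..b, v x ^ 2) * √(∫ x in a..b, v'' x ^ 2) := by
  have hvc : ContinuousOn v (Icc a b) := fun x hx => (hv x hx).continuousWithinAt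
  have hcs := abs_integral_mul_le_sqrt_mul_sqrt
    ((hvc.intervalIntegrable_of_Icc hab).memLp_two_restrict_Ioc
      ((hvc.pow 2).intervalIntegrable_of_Icc hab))
    (hv''.memLp_two_restrict_Ioc hv''2)
  simp only [← intervalIntegral.integral_of_le hab] at hcs
  rw [integral_deriv_sq_eq_neg_integral_mul hab hv hv' hva hvb hrep hv'']
  exact (neg_le_abs _).trans hcs

end Interval

theorem sq_add_mul_add_sq_le_s7 {p q r s M N : ℝ} (hM : 0 ≤ M) (hN : 0 ≤ N)
    (hpq : |p| + |q| ≤ √M) (hr : |r| ≤ √N) :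
    (p + r * s) ^ 2 + q ^ 2 ≤ 2 * M + 2 * N * s ^ 2 := by
  have hpq' : (|p| + |q|) ^ 2 ≤ M := by
    simpa [Real.sq_sqrt hM] using pow_le_pow_left₀ (by positivity) hpq 2
  have hr' : r ^ 2 ≤ N := by
    simpa [Real.sq_sqrt hN, sq_abs] using pow_le_pow_left₀ (abs_nonneg r) hr 2
  nlinarith [sq_nonneg (p - r * s), sq_abs p, sq_abs q, mul_nonneg (abs_nonneg p) (abs_nonneg q),
    mul_le_mul_of_nonneg_right hr' (sq_nonneg s)]

theorem norm_integral_le_of_norm_le_ite {F : ℝ → ℝ} {r d w B : ℝ} (hd : 0 ≤ d) (hw : r ≤ w)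
    (hB : 0 ≤ B) (hF : ∀ z ∈ Ioc (r - d) w, ‖F z‖ ≤ if z ≤ r then B else B / (w - r)) :
    ‖∫ z in (r - d)..w, F z‖ ≤ (d + 1) * B := by
  let g : ℝ → ℝ := fun z => if z ≤ r then B else B / (w - r)
  have hg₁ : EqOn g (fun _ => B) (Ι (r - d) r) := fun z hz => by
    rw [uIoc_of_le (by linarith)] at hz
    exact if_pos hz.2
  have hg₂ : EqOn g (fun _ => B / (w - r)) (Ι r w) := fun z hz => by
    rw [uIoc_of_le hw] at hz
    exact if_neg (not_le.2 hz.1)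
  have hi₁ : IntervalIntegrable g volume (r - d) r := intervalIntegrable_const.congr hg₁.symm
  have hi₂ : IntervalIntegrable g volume r w := intervalIntegrable_const.congr hg₂.symm
  have hlayer : (w - r) * (B / (w - r)) ≤ B := by
    rcases hw.eq_or_lt with h | h
    · simp [h, hB]
    · rw [mul_div_cancel₀ _ (sub_pos.2 h).ne']
  calc ‖∫ z in (r - d)..w, F z‖ ≤ ∫ z in (r - d)..w, g z :=
        intervalIntegral.norm_integral_le_of_norm_le (by linarith)
          (Filter.Eventually.of_forall hF) (hi₁.trans hi₂)
    _ = d * B + (w - r) * (B / (w - r)) := by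
        rw [← intervalIntegral.integral_add_adjacent_intervals hi₁ hi₂,
          intervalIntegral.integral_congr_ae (Filter.Eventually.of_forall hg₁),
          intervalIntegral.integral_congr_ae (Filter.Eventually.of_forall hg₂)]
        simp only [intervalIntegral.integral_const, smul_eq_mul]
        ring
    _ ≤ (d + 1) * B := by linarith

theorem norm_integral_layered_energy_le {H d σmax m₁ m₂ m₃ w s : ℝ}
    {σ g₁x g₁z g₁w g₂x g₂z g₂w : ℝ → ℝ} (hd : 0 ≤ d) (hm₁ : 0 ≤ m₁) (hm₂ : 0 ≤ m₂)
    (hm₃ : 0 ≤ m₃) (hw : -H ≤ w) (hσ : ∀ z ∈ Ici (-H - d), 0 ≤ σ z ∧ σ z ≤ σmax)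
    (h₁ : ∀ z ∈ Icc (-H - d) (-H), |g₁x z| + |g₁z z| ≤ √(m₁ + m₂ * w ^ 2) ∧ |g₁w z| ≤ √m₃)
    (h₂ : ∀ z ∈ Icc (-H) w,
      |g₂x z| + |g₂z z| ≤ √((m₁ + m₂ * w ^ 2) / (H + w)) ∧ |g₂w z| ≤ √(m₃ / (H + w))) :
    ‖∫ z in (-H - d)..w, σ z * (if z ≤ -H then (g₁x z + g₁w z * s) ^ 2 + g₁z z ^ 2
        else (g₂x z + g₂w z * s) ^ 2 + g₂z z ^ 2)‖
      ≤ σmax * (d + 1) * (2 * (m₁ + m₂ * w ^ 2) + 2 * m₃ * s ^ 2) := by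
  set E := 2 * (m₁ + m₂ * w ^ 2) + 2 * m₃ * s ^ 2 with hE
  have hσmax : 0 ≤ σmax := (hσ (-H - d) self_mem_Ici).1.trans (hσ (-H - d) self_mem_Ici).2
  have hdensity : ∀ z ∈ Ioc (-H - d) w,
      ((if z ≤ -H then (g₁x z + g₁w z * s) ^ 2 + g₁z z ^ 2
        else (g₂x z + g₂w z * s) ^ 2 + g₂z z ^ 2) ≤ if z ≤ -H then E else E / (w - -H)) := by
    intro z hz
    split_ifs with hzH
    · obtain ⟨hxz, hw'⟩ := h₁ z ⟨hz.1.le, hzH⟩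
      exact sq_add_mul_add_sq_le_s7 (by positivity) hm₃ hxz hw'
    · have hHw : 0 < H + w := by linarith [not_le.1 hzH, hz.2]
      obtain ⟨hxz, hw'⟩ := h₂ z ⟨(not_le.1 hzH).le, hz.2⟩
      calc _ ≤ 2 * ((m₁ + m₂ * w ^ 2) / (H + w)) + 2 * (m₃ / (H + w)) * s ^ 2 :=
            sq_add_mul_add_sq_le_s7 (by positivity) (by positivity) hxz hw'
        _ = E / (w - -H) := by
            rw [hE, sub_neg_eq_add, add_comm w H]
            field_simp
  refine (norm_integral_le_of_norm_le_ite (B := σmax * E) hd hw (mul_nonneg hσmax (by positivity))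
    fun z hz => ?_).trans_eq (by ring)
  obtain ⟨hσ₀, hσ₁⟩ := hσ z (Ioc_subset_Icc_self.trans Icc_subset_Ici_self hz)
  rw [Real.norm_eq_abs, abs_of_nonneg (mul_nonneg hσ₀ (by split_ifs <;> positivity)),
    mul_div_assoc, ← mul_ite]
  exact mul_le_mul hσ₁ (hdensity z hz) (by split_ifs <;> positivity) hσmax

theorem half_integral_le_of_norm_le_energy {a b K m₁ m₂ m₃ : ℝ} {F v v' v'' : ℝ → ℝ}
    (hab : a ≤ b) (hK : 0 ≤ K) (hm₁ : 0 ≤ m₁) (hm₂ : 0 ≤ m₂) (hm₃ : 0 ≤ m₃)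
    (hv : ∀ x ∈ Icc a b, HasDerivWithinAt v (v' x) (Icc a b) x)
    (hv' : ContinuousOn v' (Icc a b)) (hva : v a = 0) (hvb : v b = 0)
    (hrep : ∀ x ∈ Icc a b, v' x = v' a + ∫ t in a..x, v'' t)
    (hv'' : IntervalIntegrable v'' volume a b)
    (hv''2 : IntervalIntegrable (fun t => v'' t ^ 2) volume a b)
    (hF : ∀ x ∈ Ioc a b, ‖F x‖ ≤ K * (2 * (m₁ + m₂ * v x ^ 2) + 2 * m₃ * v' x ^ 2)) :
    (1 / 2) * ∫ x in a..b, F x ≤ K * ((b - a) * m₁ + (b - a) ^ 2 * m₂ + m₃) *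
      (1 + √(∫ x in a..b, v x ^ 2) * √(∫ x in a..b, v'' x ^ 2)) := by
  have hvc : ContinuousOn v (Icc a b) := fun x hx => (hv x hx).continuousWithinAt
  have hv2 : IntervalIntegrable (fun x => v x ^ 2) volume a b :=
    (hvc.pow 2).intervalIntegrable_of_Icc hab
  have hv'2 : IntervalIntegrable (fun x => v' x ^ 2) volume a b :=
    (hv'.pow 2).intervalIntegrable_of_Icc hab
  have hA := integral_sq_le_sq_mul_integral_deriv_sq hab hv hv' hva
  have hS := integral_deriv_sq_le_sqrt_mul_sqrt hab hv hv' hva hvb hrep hv'' hv''2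
  set A := ∫ x in a..b, v x ^ 2
  set S := ∫ x in a..b, v' x ^ 2
  set P := √A * √(∫ x in a..b, v'' x ^ 2)
  have hP : 0 ≤ P := by positivity
  have hS₀ : 0 ≤ S := intervalIntegral.integral_nonneg hab fun x _ => sq_nonneg _
  have hF_le : ∫ x in a..b, F x ≤ K * (2 * m₁ * (b - a) + 2 * m₂ * A + 2 * m₃ * S) :=
    calc ∫ x in a..b, F x ≤ ‖∫ x in a..b, F x‖ := Real.le_norm_self _
      _ ≤ ∫ x in a..b, K * (2 * (m₁ + m₂ * v x ^ 2) + 2 * m₃ * v' x ^ 2) :=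
          intervalIntegral.norm_integral_le_of_norm_le hab (Filter.Eventually.of_forall hF)
            ((((intervalIntegrable_const.add (hv2.const_mul m₂)).const_mul 2).add
              (hv'2.const_mul (2 * m₃))).const_mul K)
      _ = K * (2 * m₁ * (b - a) + 2 * m₂ * A + 2 * m₃ * S) := by
          rw [intervalIntegral.integral_const_mul, intervalIntegral.integral_add
            ((intervalIntegrable_const.add (hv2.const_mul m₂)).const_mul 2)
            (hv'2.const_mul (2 * m₃)), intervalIntegral.integral_const_mul,
            intervalIntegral.integral_add intervalIntegrable_const (hv2.const_mul m₂)]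
          simp only [intervalIntegral.integral_const_mul, intervalIntegral.integral_const,
            smul_eq_mul]
          ring
  have hm₂A : m₂ * A ≤ m₂ * ((b - a) ^ 2 * P) :=
    mul_le_mul_of_nonneg_left (hA.trans (mul_le_mul_of_nonneg_left hS (sq_nonneg _))) hm₂
  have hsum : m₁ * (b - a) + m₂ * A + m₃ * S ≤
      ((b - a) * m₁ + (b - a) ^ 2 * m₂ + m₃) * (1 + P) := by
    nlinarith [mul_le_mul_of_nonneg_left hS hm₃, mul_nonneg hm₁ (sub_nonneg.2 hab),
      mul_nonneg (mul_nonneg hm₁ (sub_nonneg.2 hab)) hP]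
  calc (1 / 2) * ∫ x in a..b, F x ≤ K * (m₁ * (b - a) + m₂ * A + m₃ * S) := by linarith
    _ ≤ K * ((b - a) * m₁ + (b - a) ^ 2 * m₂ + m₃) * (1 + P) := by
        rw [mul_assoc]; exact mul_le_mul_of_nonneg_left hsum hK

theorem stmt7_general (L H d σmax m₁ m₂ m₃ : ℝ)
    (hL : 0 < L) (hd : 0 < d) (hσmax : 0 < σmax)
    (hm₁ : 0 < m₁) (hm₂ : 0 < m₂) (hm₃ : 0 < m₃) :
    ∃ c > 0, ∀ (σ : ℝ → ℝ → ℝ), Measurable (Function.uncurry σ) →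
      (∀ x ∈ Icc (-L) L, ∀ z ∈ Ici (-H - d), 0 ≤ σ x z ∧ σ x z ≤ σmax) →
      ∀ (h₁x h₁z h₁w h₂x h₂z h₂w : ℝ → ℝ → ℝ → ℝ),
      (∀ x ∈ Icc (-L) L, ∀ z ∈ Icc (-H - d) (-H), ∀ w ∈ Ici (-H),
        |h₁x x z w| + |h₁z x z w| ≤ Real.sqrt (m₁ + m₂ * w ^ 2) ∧
        |h₁w x z w| ≤ Real.sqrt m₃) →
      (∀ x ∈ Icc (-L) L, ∀ w ∈ Ici (-H), ∀ z ∈ Icc (-H) w,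
        |h₂x x z w| + |h₂z x z w| ≤ Real.sqrt ((m₁ + m₂ * w ^ 2) / (H + w)) ∧
        |h₂w x z w| ≤ Real.sqrt (m₃ / (H + w))) →
      ∀ (v v' v'' : ℝ → ℝ),
      (∀ x ∈ Icc (-L) L, HasDerivWithinAt v (v' x) (Icc (-L) L) x) →
      ContinuousOn v' (Icc (-L) L) →
      (∀ x ∈ Icc (-L) L, -H ≤ v x) →
      v (-L) = 0 → v L = 0 → v' (-L) = 0 → v' L = 0 →
      (∀ x ∈ Icc (-L) L, v' x = v' (-L) + ∫ t in (-L)..x, v'' t) →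
      IntervalIntegrable v'' volume (-L) L →
      IntervalIntegrable (fun t => (v'' t) ^ 2) volume (-L) L →
      (1 / 2) * ∫ x in (-L)..L, (∫ z in (-H - d)..(v x),
          σ x z * (if z ≤ -H then
              (h₁x x z (v x) + h₁w x z (v x) * v' x) ^ 2 + (h₁z x z (v x)) ^ 2
            else
              (h₂x x z (v x) + h₂w x z (v x) * v' x) ^ 2 + (h₂z x z (v x)) ^ 2))
        ≤ c * (1 + Real.sqrt (∫ x in (-L)..L, (v x) ^ 2) *
            Real.sqrt (∫ x in (-L)..L, (v'' x) ^ 2)) := by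
  refine ⟨σmax * (d + 1) * (2 * L * m₁ + (2 * L) ^ 2 * m₂ + m₃), by positivity, ?_⟩
  intro σ _ hσ h₁x h₁z h₁w h₂x h₂z h₂w h₁ h₂ v v' v'' hv hv' hvH hva hvb _ _ hrep hv'' hv''2
  rw [show 2 * L = L - -L by ring]
  refine half_integral_le_of_norm_le_energy (by linarith) (by positivity) hm₁.le hm₂.le hm₃.le
    hv hv' hva hvb hrep hv'' hv''2 fun x hx => ?_
  have hx' : x ∈ Icc (-L) L := Ioc_subset_Icc_self hx
  exact norm_integral_layered_energy_le hd.le hm₁.le hm₂.le hm₃.le (hvH x hx') (hσ x hx')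
    (fun z hz => h₁ x hx' z hz (v x) (hvH x hx')) (fun z hz => h₂ x hx' (v x) (hvH x hx') z hz)

/-- Refined Dirichlet-energy bound from the proof of Lemma 3.4: there is a constant
`c > 0`, depending only on `L, H, d, σ_max, m₁, m₂, m₃`, such that for every
admissible `σ`, boundary data `h₁, h₂` (with the stated gradient bounds) and every
clamped `H²` deformation `v ≥ -H`,
`(1/2) ∫_D ∫_{-H-d}^{v(x)} σ |∇h_v|² dz dx ≤ c (1 + ‖v‖₂ ‖v''‖₂)`. -/
theorem stmt7 (L H d σmax m₁ m₂ m₃ : ℝ)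
    (hL : 0 < L) (hH : 0 < H) (hd : 0 < d) (hσmax : 0 < σmax)
    (hm₁ : 0 < m₁) (hm₂ : 0 < m₂) (hm₃ : 0 < m₃) :
    ∃ c > 0, ∀ (σ : ℝ → ℝ → ℝ), Measurable (Function.uncurry σ) →
      (∀ x ∈ Icc (-L) L, ∀ z ∈ Ici (-H - d), 0 ≤ σ x z ∧ σ x z ≤ σmax) →
      ∀ (h₁x h₁z h₁w h₂x h₂z h₂w : ℝ → ℝ → ℝ → ℝ),
      (∀ x ∈ Icc (-L) L, ∀ z ∈ Icc (-H - d) (-H), ∀ w ∈ Ici (-H),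
        |h₁x x z w| + |h₁z x z w| ≤ Real.sqrt (m₁ + m₂ * w ^ 2) ∧
        |h₁w x z w| ≤ Real.sqrt m₃) →
      (∀ x ∈ Icc (-L) L, ∀ w ∈ Ici (-H), ∀ z ∈ Icc (-H) w,
        |h₂x x z w| + |h₂z x z w| ≤ Real.sqrt ((m₁ + m₂ * w ^ 2) / (H + w)) ∧
        |h₂w x z w| ≤ Real.sqrt (m₃ / (H + w))) →
      ∀ (v v' v'' : ℝ → ℝ),
      (∀ x ∈ Icc (-L) L, HasDerivWithinAt v (v' x) (Icc (-L) L) x) →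
      ContinuousOn v' (Icc (-L) L) →
      (∀ x ∈ Icc (-L) L, -H ≤ v x) →
      v (-L) = 0 → v L = 0 → v' (-L) = 0 → v' L = 0 →
      (∀ x ∈ Icc (-L) L, v' x = v' (-L) + ∫ t in (-L)..x, v'' t) →
      IntervalIntegrable v'' volume (-L) L →
      IntervalIntegrable (fun t => (v'' t) ^ 2) volume (-L) L →
      (1 / 2) * ∫ x in (-L)..L, (∫ z in (-H - d)..(v x),
          σ x z * (if z ≤ -H then
              (h₁x x z (v x) + h₁w x z (v x) * v' x) ^ 2 + (h₁z x z (v x)) ^ 2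
            else
              (h₂x x z (v x) + h₂w x z (v x) * v' x) ^ 2 + (h₂z x z (v x)) ^ 2))
        ≤ c * (1 + Real.sqrt (∫ x in (-L)..L, (v x) ^ 2) *
            Real.sqrt (∫ x in (-L)..L, (v'' x) ^ 2)) :=
  stmt7_general L H d σmax m₁ m₂ m₃ hL hd hσmax hm₁ hm₂ hm₃
end

section
/- With the notation and hypotheses of the context, suppose in addition that β > 0, τ ≥ 0, a ≥ 0, that v(-L) = v(L) = 0, v'(-L) = v'(L) = 0, and that v' is absolutely continuous with derivative v'' ∈ L²(-L,L). Define the mechanical energy E_m(v) := (β/2)‖v''‖₂² + (τ/2 + (a/4)‖v'‖₂²)‖v'‖₂², where ‖·‖₂ denotes the L²(-L,L) norm. Then there is a constant c₁ > 0 depending only on L, H, d, β, τ, a, σ_max, m₁, m₂, m₃ such that E_m(v) - (1/2) ∫_{-L}^{L} ∫_{-H-d}^{v(x)} σ(x,z) |∇h_v(x,z)|² dz dx ≥ (β/4)‖v''‖₂² - c₁(1 + ‖v‖₂²). -/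
open MeasureTheory Set

/-!
Pointwise, `|∇h_v|² ≤ 2 (m₁ + m₂ v²) + 2 m₃ v'²` on the bottom layer and the same bound divided
by `H + v` on the top layer, whose thickness is exactly `H + v`; so the inner integral is at most
`2 σ_max (d + 1) (m₁ + m₂ v² + m₃ v'²)` whatever the position of the membrane. Everything except
`‖v'‖²` is then absorbed into `c₁ (1 + ‖v‖²)`, and for a clamped membrane
`‖v'‖² = -∫ v v'' ≤ ε ‖v''‖² + ‖v‖² / (4ε)` trades `‖v'‖²` for a quarter of the bending energy.
-/

theorem integral_primitive_mul_eq {f g : ℝ → ℝ} {a b : ℝ}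
    (hf : IntervalIntegrable f volume a b) (hg : IntervalIntegrable g volume a b) :
    ∫ x in a..b, (∫ t in a..x, f t) * g x =
      (∫ x in a..b, f x) * (∫ x in a..b, g x) - ∫ x in a..b, f x * ∫ t in a..x, g t := by
  have deriv_primitive {h : ℝ → ℝ} (hh : IntervalIntegrable h volume a b) :
      ∀ᵐ x, x ∈ uIoc a b → deriv (fun y => ∫ t in a..y, h t) x = h x := by
    filter_upwards [hh.ae_hasDerivAt_integral] with x hx hxab
    exact (hx (uIoc_subset_uIcc hxab) a left_mem_uIcc).deriv
  have ibp := (hf.absolutelyContinuousOnInterval_intervalIntegral left_mem_uIcc)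
    |>.integral_mul_deriv_eq_deriv_mul
      (hg.absolutelyContinuousOnInterval_intervalIntegral left_mem_uIcc)
  rw [intervalIntegral.integral_congr_ae
      ((deriv_primitive hg).mono fun x hx hxab => congrArg _ (hx hxab)),
    intervalIntegral.integral_congr_ae
      ((deriv_primitive hf).mono fun x hx hxab => congrArg (· * _) (hx hxab))] at ibp
  simpa using ibp

theorem integral_le_integral_of_le_Ioo_of_nonneg {f g : ℝ → ℝ} {a b : ℝ} (hab : a ≤ b)
    (hg : IntervalIntegrable g volume a b) (hg₀ : ∀ x ∈ Ioo a b, 0 ≤ g x)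
    (hfg : ∀ x ∈ Ioo a b, f x ≤ g x) :
    ∫ x in a..b, f x ≤ ∫ x in a..b, g x := by
  -- `f` need not be integrable: then its integral is `0 ≤ ∫ g`.
  by_cases hf : IntervalIntegrable f volume a b
  · exact intervalIntegral.integral_mono_on_of_le_Ioo hab hf hg hfg
  · simpa [intervalIntegral.integral_undef hf] using
      intervalIntegral.integral_mono_on_of_le_Ioo hab intervalIntegrable_const hg hg₀

theorem integral_le_of_le_Ioo_of_le_Ioo {f : ℝ → ℝ} {a b c A B : ℝ} (hab : a ≤ b)
    (hbc : b ≤ c) (hA : 0 ≤ A) (hB : 0 ≤ B) (hfA : ∀ x ∈ Ioo a b, f x ≤ A)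
    (hfB : ∀ x ∈ Ioo b c, f x ≤ B) :
    ∫ x in a..c, f x ≤ (b - a) * A + (c - b) * B := by
  by_cases hf : IntervalIntegrable f volume a c
  · have hb : b ∈ uIcc a c := mem_uIcc_of_le hab hbc
    rw [← intervalIntegral.integral_add_adjacent_intervals
      (hf.mono_set (uIcc_subset_uIcc left_mem_uIcc hb))
      (hf.mono_set (uIcc_subset_uIcc hb right_mem_uIcc))]
    gcongr
    · simpa using intervalIntegral.integral_mono_on_of_le_Ioo hab
        (hf.mono_set (uIcc_subset_uIcc left_mem_uIcc hb)) intervalIntegrable_const hfA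
    · simpa using intervalIntegral.integral_mono_on_of_le_Ioo hbc
        (hf.mono_set (uIcc_subset_uIcc hb right_mem_uIcc)) intervalIntegrable_const hfB
  · rw [intervalIntegral.integral_undef hf]
    exact add_nonneg (mul_nonneg (sub_nonneg.2 hab) hA) (mul_nonneg (sub_nonneg.2 hbc) hB)

section ClampedProfile

variable {a b : ℝ} {v v' v'' : ℝ → ℝ}

theorem eq_integral_of_hasDerivWithinAt_Icc
    (hv : ∀ x ∈ Icc a b, HasDerivWithinAt v (v' x) (Icc a b) x)
    (hv'c : ContinuousOn v' (Icc a b)) (hva : v a = 0) :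
    ∀ x ∈ Icc a b, v x = ∫ t in a..x, v' t := by
  intro x hx
  have hsub : Icc a x ⊆ Icc a b := Icc_subset_Icc_right hx.2
  rw [intervalIntegral.integral_eq_sub_of_hasDerivAt_of_le hx.1
    (fun y hy => (hv y (hsub hy)).continuousWithinAt.mono hsub)
    (fun y hy => (hv y (hsub (Ioo_subset_Icc_self hy))).hasDerivAt
      (Icc_mem_nhds hy.1 (hy.2.trans_le hx.2)))
    ((hv'c.mono hsub).intervalIntegrable_of_Icc hx.1), hva, sub_zero]

theorem integral_mul_second_deriv_eq (hab : a ≤ b)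
    (hv : ∀ x ∈ Icc a b, HasDerivWithinAt v (v' x) (Icc a b) x)
    (hv'c : ContinuousOn v' (Icc a b)) (hva : v a = 0)
    (hv' : ∀ x ∈ Icc a b, v' x = ∫ t in a..x, v'' t) (hv'' : IntervalIntegrable v'' volume a b) :
    ∫ x in a..b, v x * v'' x = v b * v' b - ∫ x in a..b, v' x ^ 2 := by
  have hv_eq := eq_integral_of_hasDerivWithinAt_Icc hv hv'c hva
  have hab' := uIcc_of_le hab
  have ibp := integral_primitive_mul_eq (hv'c.intervalIntegrable_of_Icc hab) hv''
  rw [← hv_eq b ⟨hab, le_rfl⟩, ← hv' b ⟨hab, le_rfl⟩] at ibp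
  rw [intervalIntegral.integral_congr fun x hx => congrArg (· * v'' x) (hv_eq x (hab' ▸ hx)),
    ibp, intervalIntegral.integral_congr fun x hx =>
      show v' x * _ = v' x ^ 2 by rw [← hv' x (hab' ▸ hx), sq]]

theorem integral_sq_deriv_le (hab : a ≤ b) {ε : ℝ} (hε : 0 < ε)
    (hv : ∀ x ∈ Icc a b, HasDerivWithinAt v (v' x) (Icc a b) x)
    (hv'c : ContinuousOn v' (Icc a b)) (hva : v a = 0) (hvb : v b = 0)
    (hv' : ∀ x ∈ Icc a b, v' x = ∫ t in a..x, v'' t) (hv'' : IntervalIntegrable v'' volume a b)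
    (hv''sq : IntervalIntegrable (fun x => v'' x ^ 2) volume a b) :
    ∫ x in a..b, v' x ^ 2 ≤
      ε * (∫ x in a..b, v'' x ^ 2) + (4 * ε)⁻¹ * ∫ x in a..b, v x ^ 2 := by
  have hvc : ContinuousOn v (Icc a b) := fun x hx => (hv x hx).continuousWithinAt
  have young : ∀ x, -(v x * v'' x) ≤ ε * v'' x ^ 2 + (4 * ε)⁻¹ * v x ^ 2 := fun x => by
    have : 0 ≤ (2 * ε * v'' x + v x) ^ 2 / (4 * ε) := by positivity
    rw [← sub_nonneg]
    convert this using 1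
    field_simp
    ring
  have hvsq : IntervalIntegrable (fun x => v x ^ 2) volume a b :=
    (hvc.pow 2).intervalIntegrable_of_Icc hab
  calc ∫ x in a..b, v' x ^ 2 = ∫ x in a..b, -(v x * v'' x) := by
        rw [intervalIntegral.integral_neg, integral_mul_second_deriv_eq hab hv hv'c hva hv' hv'',
          hvb]
        ring
    _ ≤ ∫ x in a..b, (ε * v'' x ^ 2 + (4 * ε)⁻¹ * v x ^ 2) :=
        intervalIntegral.integral_mono hab (hv''.continuousOn_mul (uIcc_of_le hab ▸ hvc)).neg
          ((hv''sq.const_mul _).add (hvsq.const_mul _)) young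
    _ = ε * (∫ x in a..b, v'' x ^ 2) + (4 * ε)⁻¹ * ∫ x in a..b, v x ^ 2 := by
        rw [intervalIntegral.integral_add (hv''sq.const_mul _) (hvsq.const_mul _),
          intervalIntegral.integral_const_mul, intervalIntegral.integral_const_mul]

end ClampedProfile

theorem sq_add_mul_add_sq_le_s8 {A B C p X Y : ℝ} (hX : 0 ≤ X) (hY : 0 ≤ Y)
    (hAC : |A| + |C| ≤ √X) (hB : |B| ≤ √Y) :
    (A + B * p) ^ 2 + C ^ 2 ≤ 2 * X + 2 * Y * p ^ 2 := by
  have hAC' : A ^ 2 + C ^ 2 ≤ X := by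
    have := (Real.le_sqrt (by positivity) hX).1 hAC
    nlinarith [sq_abs A, sq_abs C, abs_nonneg A, abs_nonneg C]
  have hB' : B ^ 2 ≤ Y := by
    simpa only [sq_abs] using (Real.le_sqrt (abs_nonneg B) hY).1 hB
  nlinarith [sq_nonneg (A - B * p), mul_le_mul_of_nonneg_right hB' (sq_nonneg p)]

theorem integral_weighted_sq_grad_le {H d σmax M m₃ w p : ℝ}
    {σ g₁x g₁z g₁w g₂x g₂z g₂w : ℝ → ℝ} (hd : 0 ≤ d) (hσmax : 0 ≤ σmax) (hM : 0 ≤ M)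
    (hm₃ : 0 ≤ m₃) (hw : -H ≤ w) (hσ : ∀ z ∈ Ioo (-H - d) w, σ z ≤ σmax)
    (h₁ : ∀ z ∈ Ioo (-H - d) (-H), |g₁x z| + |g₁z z| ≤ √M ∧ |g₁w z| ≤ √m₃)
    (h₂ : ∀ z ∈ Ioo (-H) w,
      |g₂x z| + |g₂z z| ≤ √(M / (H + w)) ∧ |g₂w z| ≤ √(m₃ / (H + w))) :
    ∫ z in (-H - d)..w, σ z * (if z ≤ -H then (g₁x z + g₁w z * p) ^ 2 + g₁z z ^ 2
        else (g₂x z + g₂w z * p) ^ 2 + g₂z z ^ 2) ≤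
      2 * σmax * (d + 1) * (M + m₃ * p ^ 2) := by
  have hHw : 0 ≤ H + w := by linarith
  set Q := 2 * M + 2 * m₃ * p ^ 2
  have htop : (w - -H) * (σmax * Q / (H + w)) ≤ σmax * Q := by
    rcases hHw.eq_or_lt with h | h
    · rw [show w - -H = 0 by linarith, zero_mul]
      positivity
    · rw [show w - -H = H + w by ring, mul_div_cancel₀ _ h.ne']
  refine (integral_le_of_le_Ioo_of_le_Ioo (b := -H) (A := σmax * Q) (B := σmax * Q / (H + w))
    (by linarith) hw (by positivity) (by positivity) ?bottom ?top).trans ?_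
  case bottom =>
    intro z hz
    obtain ⟨hx, hw'⟩ := h₁ z hz
    rw [if_pos hz.2.le]
    exact mul_le_mul (hσ z ⟨hz.1, hz.2.trans_le hw⟩) (sq_add_mul_add_sq_le_s8 hM hm₃ hx hw')
      (by positivity) hσmax
  case top =>
    intro z hz
    obtain ⟨hx, hw'⟩ := h₂ z hz
    rw [if_neg (not_le.2 hz.1)]
    calc _ ≤ σmax * (2 * (M / (H + w)) + 2 * (m₃ / (H + w)) * p ^ 2) :=
          mul_le_mul (hσ z ⟨by linarith [hz.1], hz.2⟩)
            (sq_add_mul_add_sq_le_s8 (by positivity) (by positivity) hx hw') (by positivity) hσmax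
      _ = σmax * Q / (H + w) := by ring
  calc _ ≤ d * (σmax * Q) + σmax * Q := by
        rw [show -H - (-H - d) = d by ring]
        linarith
    _ = _ := by ring

theorem integral_integral_weighted_sq_grad_le {a b H d σmax m₁ m₂ m₃ : ℝ} (hab : a ≤ b)
    (hd : 0 ≤ d) (hσmax : 0 ≤ σmax) (hm₁ : 0 ≤ m₁) (hm₂ : 0 ≤ m₂) (hm₃ : 0 ≤ m₃)
    {σ : ℝ → ℝ → ℝ} {h₁x h₁z h₁w h₂x h₂z h₂w : ℝ → ℝ → ℝ → ℝ} {v v' : ℝ → ℝ}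
    (hσ : ∀ x ∈ Icc a b, ∀ z ∈ Ici (-H - d), σ x z ≤ σmax)
    (hh₁ : ∀ x ∈ Icc a b, ∀ z ∈ Icc (-H - d) (-H), ∀ w ∈ Ici (-H),
      |h₁x x z w| + |h₁z x z w| ≤ √(m₁ + m₂ * w ^ 2) ∧ |h₁w x z w| ≤ √m₃)
    (hh₂ : ∀ x ∈ Icc a b, ∀ w ∈ Ici (-H), ∀ z ∈ Icc (-H) w,
      |h₂x x z w| + |h₂z x z w| ≤ √((m₁ + m₂ * w ^ 2) / (H + w)) ∧
        |h₂w x z w| ≤ √(m₃ / (H + w)))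
    (hvc : ContinuousOn v (Icc a b)) (hv'c : ContinuousOn v' (Icc a b))
    (hvH : ∀ x ∈ Icc a b, -H ≤ v x) :
    ∫ x in a..b, (∫ z in (-H - d)..(v x), σ x z * (if z ≤ -H then
        (h₁x x z (v x) + h₁w x z (v x) * v' x) ^ 2 + h₁z x z (v x) ^ 2
      else (h₂x x z (v x) + h₂w x z (v x) * v' x) ^ 2 + h₂z x z (v x) ^ 2)) ≤
      2 * σmax * (d + 1) *
        ((b - a) * m₁ + m₂ * (∫ x in a..b, v x ^ 2) + m₃ * ∫ x in a..b, v' x ^ 2) := by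
  have hvsq : IntervalIntegrable (fun x => v x ^ 2) volume a b :=
    ContinuousOn.intervalIntegrable_of_Icc hab (by fun_prop)
  have hv'sq : IntervalIntegrable (fun x => v' x ^ 2) volume a b :=
    ContinuousOn.intervalIntegrable_of_Icc hab (by fun_prop)
  have hbound_int : IntervalIntegrable
      (fun x => 2 * σmax * (d + 1) * (m₁ + m₂ * v x ^ 2 + m₃ * v' x ^ 2)) volume a b :=
    ContinuousOn.intervalIntegrable_of_Icc hab (by fun_prop)
  calc _ ≤ ∫ x in a..b, 2 * σmax * (d + 1) * (m₁ + m₂ * v x ^ 2 + m₃ * v' x ^ 2) :=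
        integral_le_integral_of_le_Ioo_of_nonneg hab hbound_int (fun x _ => by positivity)
          fun x hx =>
          have hx : x ∈ Icc a b := Ioo_subset_Icc_self hx
          integral_weighted_sq_grad_le hd hσmax (by positivity) hm₃ (hvH x hx)
            (fun z hz => hσ x hx z hz.1.le)
            (fun z hz => hh₁ x hx z (Ioo_subset_Icc_self hz) (v x) (hvH x hx))
            (fun z hz => hh₂ x hx (v x) (hvH x hx) z (Ioo_subset_Icc_self hz))
    _ = _ := by
      rw [intervalIntegral.integral_const_mul, intervalIntegral.integral_add
        (intervalIntegrable_const.add (hvsq.const_mul _)) (hv'sq.const_mul _),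
        intervalIntegral.integral_add intervalIntegrable_const (hvsq.const_mul _),
        intervalIntegral.integral_const, intervalIntegral.integral_const_mul,
        intervalIntegral.integral_const_mul, smul_eq_mul]

theorem stmt8_general (L H d β τ a σmax m₁ m₂ m₃ : ℝ)
    (hL : 0 < L) (hd : 0 < d) (hβ : 0 < β) (hτ : 0 ≤ τ) (ha : 0 ≤ a)
    (hσmax : 0 < σmax) (hm₁ : 0 < m₁) (hm₂ : 0 < m₂) (hm₃ : 0 < m₃) :
    ∃ c₁ > 0, ∀ (σ : ℝ → ℝ → ℝ), Measurable (Function.uncurry σ) →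
      (∀ x ∈ Icc (-L) L, ∀ z ∈ Ici (-H - d), 0 ≤ σ x z ∧ σ x z ≤ σmax) →
      ∀ (h₁x h₁z h₁w h₂x h₂z h₂w : ℝ → ℝ → ℝ → ℝ),
      (∀ x ∈ Icc (-L) L, ∀ z ∈ Icc (-H - d) (-H), ∀ w ∈ Ici (-H),
        |h₁x x z w| + |h₁z x z w| ≤ Real.sqrt (m₁ + m₂ * w ^ 2) ∧
        |h₁w x z w| ≤ Real.sqrt m₃) →
      (∀ x ∈ Icc (-L) L, ∀ w ∈ Ici (-H), ∀ z ∈ Icc (-H) w,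
        |h₂x x z w| + |h₂z x z w| ≤ Real.sqrt ((m₁ + m₂ * w ^ 2) / (H + w)) ∧
        |h₂w x z w| ≤ Real.sqrt (m₃ / (H + w))) →
      ∀ (v v' v'' : ℝ → ℝ),
      (∀ x ∈ Icc (-L) L, HasDerivWithinAt v (v' x) (Icc (-L) L) x) →
      ContinuousOn v' (Icc (-L) L) →
      (∀ x ∈ Icc (-L) L, -H ≤ v x) →
      v (-L) = 0 → v L = 0 → v' (-L) = 0 → v' L = 0 →
      (∀ x ∈ Icc (-L) L, v' x = v' (-L) + ∫ t in (-L)..x, v'' t) →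
      IntervalIntegrable v'' volume (-L) L →
      IntervalIntegrable (fun t => (v'' t) ^ 2) volume (-L) L →
      (β / 4) * (∫ x in (-L)..L, (v'' x) ^ 2) -
          c₁ * (1 + ∫ x in (-L)..L, (v x) ^ 2) ≤
        (β / 2) * (∫ x in (-L)..L, (v'' x) ^ 2) +
          (τ / 2 + (a / 4) * ∫ x in (-L)..L, (v' x) ^ 2) *
            (∫ x in (-L)..L, (v' x) ^ 2) -
          (1 / 2) * ∫ x in (-L)..L, (∫ z in (-H - d)..(v x),
            σ x z * (if z ≤ -H then
                (h₁x x z (v x) + h₁w x z (v x) * v' x) ^ 2 + (h₁z x z (v x)) ^ 2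
              else
                (h₂x x z (v x) + h₂w x z (v x) * v' x) ^ 2 + (h₂z x z (v x)) ^ 2)) := by
  have hLL : -L ≤ L := by linarith
  refine ⟨σmax * (d + 1) * (2 * L * m₁ + m₂) + (σmax * (d + 1) * m₃) ^ 2 / β, by positivity, ?_⟩
  intro σ _ hσ h₁x h₁z h₁w h₂x h₂z h₂w hh₁ hh₂ v v' v'' hv hv'c hvH hvL hvR hv'L _ hv' hv''
    hv''sq
  have hvc : ContinuousOn v (Icc (-L) L) := fun x hx => (hv x hx).continuousWithinAt
  have energy := integral_integral_weighted_sq_grad_le hLL hd.le hσmax.le hm₁.le hm₂.le hm₃.le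
    (fun x hx z hz => (hσ x hx z hz).2) hh₁ hh₂ hvc hv'c hvH
  have interpolation := integral_sq_deriv_le hLL (ε := β / (4 * (σmax * (d + 1) * m₃)))
    (by positivity) hv hv'c hvL hvR (fun x hx => by rw [hv' x hx, hv'L, zero_add]) hv'' hv''sq
  set A := ∫ x in (-L)..L, v'' x ^ 2
  set B := ∫ x in (-L)..L, v' x ^ 2
  set C := ∫ x in (-L)..L, v x ^ 2
  have hB : 0 ≤ B := intervalIntegral.integral_nonneg hLL fun x _ => sq_nonneg _
  have hC : 0 ≤ C := intervalIntegral.integral_nonneg hLL fun x _ => sq_nonneg _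
  have hB_absorbed : 2 * σmax * (d + 1) * m₃ * B ≤
      β / 2 * A + 2 * (σmax * (d + 1) * m₃) ^ 2 / β * C := by
    calc _ ≤ 2 * σmax * (d + 1) * m₃ * (β / (4 * (σmax * (d + 1) * m₃)) * A +
          (4 * (β / (4 * (σmax * (d + 1) * m₃))))⁻¹ * C) :=
          mul_le_mul_of_nonneg_left interpolation (by positivity)
      _ = _ := by
        field_simp
        ring
  have hmech : 0 ≤ (τ / 2 + a / 4 * B) * B := by positivity
  linear_combination (1 / 2) * energy + (1 / 2) * hB_absorbed + hmech +
    (by positivity : 0 ≤ 2 * σmax * (d + 1) * L * m₁ * C + σmax * (d + 1) * m₂ +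
      (σmax * (d + 1) * m₃) ^ 2 / β)

/-- Coercivity lower bound of Lemma 3.4: there is `c₁ > 0`, depending only on
`L, H, d, β, τ, a, σ_max, m₁, m₂, m₃`, such that for all admissible data,
`E_m(v) - (1/2) ∫_D ∫_{-H-d}^{v(x)} σ |∇h_v|² dz dx ≥ (β/4)‖v''‖₂² - c₁(1 + ‖v‖₂²)`,
where `E_m(v) = (β/2)‖v''‖₂² + (τ/2 + (a/4)‖v'‖₂²)‖v'‖₂²`. -/
theorem stmt8 (L H d β τ a σmax m₁ m₂ m₃ : ℝ)
    (hL : 0 < L) (hH : 0 < H) (hd : 0 < d) (hβ : 0 < β) (hτ : 0 ≤ τ) (ha : 0 ≤ a)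
    (hσmax : 0 < σmax) (hm₁ : 0 < m₁) (hm₂ : 0 < m₂) (hm₃ : 0 < m₃) :
    ∃ c₁ > 0, ∀ (σ : ℝ → ℝ → ℝ), Measurable (Function.uncurry σ) →
      (∀ x ∈ Icc (-L) L, ∀ z ∈ Ici (-H - d), 0 ≤ σ x z ∧ σ x z ≤ σmax) →
      ∀ (h₁x h₁z h₁w h₂x h₂z h₂w : ℝ → ℝ → ℝ → ℝ),
      (∀ x ∈ Icc (-L) L, ∀ z ∈ Icc (-H - d) (-H), ∀ w ∈ Ici (-H),
        |h₁x x z w| + |h₁z x z w| ≤ Real.sqrt (m₁ + m₂ * w ^ 2) ∧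
        |h₁w x z w| ≤ Real.sqrt m₃) →
      (∀ x ∈ Icc (-L) L, ∀ w ∈ Ici (-H), ∀ z ∈ Icc (-H) w,
        |h₂x x z w| + |h₂z x z w| ≤ Real.sqrt ((m₁ + m₂ * w ^ 2) / (H + w)) ∧
        |h₂w x z w| ≤ Real.sqrt (m₃ / (H + w))) →
      ∀ (v v' v'' : ℝ → ℝ),
      (∀ x ∈ Icc (-L) L, HasDerivWithinAt v (v' x) (Icc (-L) L) x) →
      ContinuousOn v' (Icc (-L) L) →
      (∀ x ∈ Icc (-L) L, -H ≤ v x) →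
      v (-L) = 0 → v L = 0 → v' (-L) = 0 → v' L = 0 →
      (∀ x ∈ Icc (-L) L, v' x = v' (-L) + ∫ t in (-L)..x, v'' t) →
      IntervalIntegrable v'' volume (-L) L →
      IntervalIntegrable (fun t => (v'' t) ^ 2) volume (-L) L →
      (β / 4) * (∫ x in (-L)..L, (v'' x) ^ 2) -
          c₁ * (1 + ∫ x in (-L)..L, (v x) ^ 2) ≤
        (β / 2) * (∫ x in (-L)..L, (v'' x) ^ 2) +
          (τ / 2 + (a / 4) * ∫ x in (-L)..L, (v' x) ^ 2) *
            (∫ x in (-L)..L, (v' x) ^ 2) -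
          (1 / 2) * ∫ x in (-L)..L, (∫ z in (-H - d)..(v x),
            σ x z * (if z ≤ -H then
                (h₁x x z (v x) + h₁w x z (v x) * v' x) ^ 2 + (h₁z x z (v x)) ^ 2
              else
                (h₂x x z (v x) + h₂w x z (v x) * v' x) ^ 2 + (h₂z x z (v x)) ^ 2)) :=
  stmt8_general L H d β τ a σmax m₁ m₂ m₃ hL hd hβ hτ ha hσmax hm₁ hm₂ hm₃
end

section
/- Let L, H, d > 0, V > 0, σ₂ > 0, and let σ₁ : [-L,L] → ℝ be continuously differentiable and positive. Define h₂(x,z,w) := V (σ₂ d + σ₁(x)(H + z)) / (σ₂ d + σ₁(x)(H + w)) for (x,z,w) ∈ [-L,L] × [-H,∞) × [-H,∞). Then there exist constants m₁, m₂, m₃ > 0 such that for all x ∈ [-L,L] and all -H ≤ z ≤ w with w > -H: |∂_x h₂(x,z,w)| + |∂_z h₂(x,z,w)| ≤ √((m₁ + m₂ w²)/(H + w)) and |∂_w h₂(x,z,w)| ≤ √(m₃/(H + w)). -/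
/-!
Write `A = σ₂ d`, `s = σ₁ x`, `N = A + s (H + z)` and `D = A + s (H + w)`, so that `h₂ = V N / D` with
`∂ₓh₂ = V σ₁' A (z - w) / D²`, `∂_z h₂ = V s / D` and `∂_w h₂ = -V N s / D²`.
On `-H ≤ z ≤ w` we have `0 ≤ N ≤ D`, so `|∂_w h₂| ≤ ∂_z h₂`, which is at most `V M / A` since `D ≥ A`
and at most `V / (H + w)` since `D ≥ s (H + w)`; the product of these two bounds gives the estimate
for `∂_w h₂`. Likewise `D² ≥ A m (H + w)` absorbs the factor `z - w` in `∂ₓh₂`, so `|∂ₓh₂| + |∂_z h₂|`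
is bounded by a constant `C`, and `C² (H + w) ≤ C² (H + 1) + C² w²`. The bounds `m ≤ σ₁ ≤ M` and
`|σ₁'| ≤ B` come from compactness of `[-L, L]`.
-/

open Set

theorem ContDiffOn.exists_bounds_of_pos_Icc {f : ℝ → ℝ} {a b : ℝ} (hab : a < b)
    (hf : ContDiffOn ℝ 1 f (Icc a b)) (hpos : ∀ x ∈ Icc a b, 0 < f x) :
    ∃ m > 0, ∃ M B : ℝ, ∀ x ∈ Icc a b,
      m ≤ f x ∧ f x ≤ M ∧ |derivWithin f (Icc a b) x| ≤ B := by
  have hne : (Icc a b).Nonempty := nonempty_Icc.mpr hab.le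
  obtain ⟨x₀, hx₀, hmin⟩ := isCompact_Icc.exists_isMinOn hne hf.continuousOn
  obtain ⟨M, hM⟩ := isCompact_Icc.exists_bound_of_continuousOn hf.continuousOn
  obtain ⟨B, hB⟩ := isCompact_Icc.exists_bound_of_continuousOn
    (hf.continuousOn_derivWithin (uniqueDiffOn_Icc hab) le_rfl)
  exact ⟨f x₀, hpos x₀ hx₀, M, B, fun x hx =>
    ⟨hmin hx, (le_abs_self _).trans (hM x hx), hB x hx⟩⟩

section Derivatives

variable {A V a b s z w : ℝ}

theorem HasDerivWithinAt.affine_div_affine {f : ℝ → ℝ} {f' x : ℝ} {S : Set ℝ}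
    (hf : HasDerivWithinAt f f' S x) (hD : A + f x * b ≠ 0) :
    HasDerivWithinAt (fun y => V * (A + f y * a) / (A + f y * b))
      (V * f' * A * (a - b) / (A + f x * b) ^ 2) S x :=
  ((((hf.mul_const a).const_add A).const_mul V).div
    ((hf.mul_const b).const_add A) hD).congr_deriv (by ring)

theorem hasDerivAt_affine_div_const (H : ℝ) :
    HasDerivAt (fun z => V * (A + s * (H + z)) / (A + s * (H + w)))
      (V * s / (A + s * (H + w))) z :=
  (((((hasDerivAt_id' z).const_add H).const_mul s).const_add A).const_mul V
    |>.div_const (A + s * (H + w))).congr_deriv (by ring)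

theorem hasDerivAt_const_div_affine (H : ℝ) (hD : A + s * (H + w) ≠ 0) :
    HasDerivAt (fun w => V * (A + s * (H + z)) / (A + s * (H + w)))
      (-(V * (A + s * (H + z)) * s) / (A + s * (H + w)) ^ 2) w :=
  ((hasDerivAt_const w (V * (A + s * (H + z)))).div
    ((((hasDerivAt_id' w).const_add H).const_mul s).const_add A) hD).congr_deriv (by ring)

end Derivatives

section Bounds

variable {A V H m M B s s' z w : ℝ}

theorem abs_partial_x_le (hV : 0 ≤ V) (hA : 0 < A) (hm : 0 < m) (hms : m ≤ s) (hB : |s'| ≤ B)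
    (hz : -H ≤ z) (hzw : z ≤ w) (hw : -H < w) :
    |V * s' * A * (z - w) / (A + s * (H + w)) ^ 2| ≤ V * B / m := by
  have hHw : 0 < H + w := by linarith
  have hmD : m * (H + w) ≤ A + s * (H + w) := by nlinarith
  have hAD : A ≤ A + s * (H + w) := by nlinarith
  have hzw' : |z - w| ≤ H + w := by rw [abs_sub_comm, abs_of_nonneg (by linarith)]; linarith
  have hB0 : 0 ≤ B := (abs_nonneg _).trans hB
  calc |V * s' * A * (z - w) / (A + s * (H + w)) ^ 2|
      = V * |s'| * A * |z - w| / (A + s * (H + w)) ^ 2 := by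
        rw [abs_div, abs_mul, abs_mul, abs_mul, abs_of_nonneg hV, abs_of_pos hA, abs_sq]
    _ ≤ V * B * A * (H + w) / (A * (m * (H + w))) := by
        refine div_le_div₀ (by positivity) (by gcongr) (by positivity) ?_
        rw [sq]
        exact mul_le_mul hAD hmD (by positivity) (by linarith)
    _ = V * B / m := by field_simp

theorem abs_partial_z_le (hV : 0 ≤ V) (hA : 0 < A) (hs : 0 ≤ s) (hsM : s ≤ M) (hw : -H < w) :
    |V * s / (A + s * (H + w))| ≤ V * M / A := by
  have hHw : 0 < H + w := by linarith
  have hAD : A ≤ A + s * (H + w) := by nlinarith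
  have hM : 0 ≤ M := hs.trans hsM
  rw [abs_of_nonneg (by positivity)]
  gcongr

theorem sq_abs_partial_w_le (hV : 0 ≤ V) (hA : 0 < A) (hs : 0 < s) (hsM : s ≤ M)
    (hz : -H ≤ z) (hzw : z ≤ w) (hw : -H < w) :
    |-(V * (A + s * (H + z)) * s) / (A + s * (H + w)) ^ 2| ^ 2 ≤ V * M / A * V / (H + w) := by
  have hHw : 0 < H + w := by linarith
  set N := A + s * (H + z)
  set D := A + s * (H + w)
  have hD : 0 < D := by positivity
  have hN : 0 ≤ N := by nlinarith
  have hND : N ≤ D := by nlinarith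
  have hq : |-(V * N * s) / D ^ 2| ≤ V * s / D := by
    have hsplit : V * N * s / D ^ 2 = V * s / D * (N / D) := by field_simp
    rw [neg_div, abs_neg, hsplit, abs_of_nonneg (by positivity)]
    exact mul_le_of_le_one_right (by positivity) ((div_le_one hD).mpr hND)
  have hqM : V * s / D ≤ V * M / A :=
    (le_abs_self _).trans (abs_partial_z_le hV hA hs.le hsM hw)
  have hqw : V * s / D ≤ V / (H + w) := by
    rw [div_le_div_iff₀ hD hHw]
    nlinarith
  calc _ ≤ (V * s / D) ^ 2 := by gcongr
    _ ≤ V * M / A * (V / (H + w)) := by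
        rw [sq]
        exact mul_le_mul hqM hqw (by positivity) ((by positivity : 0 ≤ V * s / D).trans hqM)
    _ = V * M / A * V / (H + w) := by ring

end Bounds

theorem le_sqrt_add_mul_sq_div {C H w : ℝ} (hw : -H < w) :
    C ≤ Real.sqrt ((C ^ 2 * (H + 1) + C ^ 2 * w ^ 2) / (H + w)) := by
  refine Real.le_sqrt_of_sq_le ?_
  rw [le_div_iff₀ (by linarith)]
  nlinarith [mul_nonneg (sq_nonneg C) (sq_nonneg (2 * w - 1))]

/-- Example 2.1: the explicit boundary-data function `h₂` on the region between the
layer and the elastic plate satisfies the weighted gradient bounds (2.3f): there are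
`m₁, m₂, m₃ > 0` with `|∂ₓh₂| + |∂_zh₂| ≤ √((m₁ + m₂ w²)/(H+w))` and
`|∂_wh₂| ≤ √(m₃/(H+w))` for `-H ≤ z ≤ w`, `w > -H`. -/
theorem stmt12 (L H d V σ₂ : ℝ)
    (hL : 0 < L) (hH : 0 < H) (hd : 0 < d) (hV : 0 < V) (hσ₂ : 0 < σ₂)
    (σ₁ : ℝ → ℝ)
    (hσ₁ : ContDiffOn ℝ 1 σ₁ (Icc (-L) L))
    (hσ₁pos : ∀ x ∈ Icc (-L) L, 0 < σ₁ x)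
    (h₂ : ℝ → ℝ → ℝ → ℝ)
    (hh₂ : ∀ x z w : ℝ,
      h₂ x z w = V * (σ₂ * d + σ₁ x * (H + z)) / (σ₂ * d + σ₁ x * (H + w))) :
    ∃ m₁ > 0, ∃ m₂ > 0, ∃ m₃ > 0,
      ∀ x ∈ Icc (-L) L, ∀ w : ℝ, -H < w → ∀ z ∈ Icc (-H) w,
        |derivWithin (fun x' => h₂ x' z w) (Icc (-L) L) x| +
            |deriv (fun z' => h₂ x z' w) z| ≤
          Real.sqrt ((m₁ + m₂ * w ^ 2) / (H + w)) ∧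
        |deriv (fun w' => h₂ x z w') w| ≤ Real.sqrt (m₃ / (H + w)) := by
  obtain ⟨m, hm, M, B, hσ⟩ := hσ₁.exists_bounds_of_pos_Icc (by linarith) hσ₁pos
  obtain ⟨hmL, hML, hBL⟩ := hσ (-L) ⟨le_rfl, by linarith⟩
  have hA : 0 < σ₂ * d := mul_pos hσ₂ hd
  have hM : 0 < M := hm.trans_le (hmL.trans hML)
  have hB : 0 ≤ B := (abs_nonneg _).trans hBL
  set C := V * B / m + V * M / (σ₂ * d)
  refine ⟨C ^ 2 * (H + 1), by positivity, C ^ 2, by positivity, V * M / (σ₂ * d) * V,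
    by positivity, ?_⟩
  rintro x hx w hw z ⟨hz, hzw⟩
  obtain ⟨hmx, hMx, hBx⟩ := hσ x hx
  have hs : 0 < σ₁ x := hσ₁pos x hx
  have hD : σ₂ * d + σ₁ x * (H + w) ≠ 0 := by
    have : 0 < H + w := by linarith
    positivity
  simp only [hh₂]
  rw [((hσ₁.differentiableOn one_ne_zero x hx).hasDerivWithinAt.affine_div_affine hD).derivWithin
      (uniqueDiffOn_Icc (by linarith) x hx),
    (hasDerivAt_affine_div_const H).deriv, (hasDerivAt_const_div_affine H hD).deriv,
    add_sub_add_left_eq_sub]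
  refine ⟨?_, Real.le_sqrt_of_sq_le (sq_abs_partial_w_le hV.le hA hs hMx hz hzw hw)⟩
  calc _ ≤ C := add_le_add (abs_partial_x_le hV.le hA hm hmx hBx hz hzw hw)
        (abs_partial_z_le hV.le hA hs.le hMx hw)
    _ ≤ _ := le_sqrt_add_mul_sq_div hw
end
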